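/- arXiv:1512.03514 — 6 statements merged into one kernel-verified Lean document; each statement's English description precedes it below -/
import Mathlib

section
/- For every μ ≥ 0, every x > 0 and every y > 0, the series Σ_{n=1}^∞ |ξ_{μ,n}(y)| · K_{μ+n+1}(x)/K_{μ+n}(x) converges (is finite). -/
open MeasureTheory ProbabilityTheory Real Filter Set
open scoped ENNReal NNReal Topology

/-- Modified Bessel function of the first kind `I_μ(x)`, defined by its series. -/
noncomputable def besselI (μ x : ℝ) : ℝ :=
  ∑' k : ℕ, (x / 2) ^ (2 * (k : ℝ) + μ) / ((k.factorial : ℝ) * Real.Gamma ((k : ℝ) + μ + 1))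

/-- Macdonald function (modified Bessel function of the second kind) `K_μ(x)`. -/
noncomputable def besselK (μ x : ℝ) : ℝ :=
  ∫ t in Set.Ioi (0 : ℝ), Real.exp (-(x * Real.cosh t)) * Real.cosh (μ * t)

/-- `S_m = 2 π^{(m+1)/2} / Γ((m+1)/2)`, the surface area of the `m`-dimensional unit sphere. -/
noncomputable def sphereArea (m : ℕ) : ℝ :=
  2 * Real.pi ^ (((m : ℝ) + 1) / 2) / Real.Gamma (((m : ℝ) + 1) / 2)

/-- The coefficient `ξ_{μ,n}(y)`. -/
noncomputable def xiCoef (μ : ℝ) (n : ℕ) (y : ℝ) : ℝ :=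
  if μ = 0 ∧ n = 0 then besselI 0 y ^ 2 / 2
  else (-1 : ℝ) ^ n * (μ + n) * Real.Gamma (2 * μ + n) * besselI (μ + n) y ^ 2
    / (n.factorial : ℝ)

/-- The coefficient `ζ_{μ,n}(y)`. -/
noncomputable def zetaCoef (μ : ℝ) (n : ℕ) (y : ℝ) : ℝ :=
  if μ = 0 ∧ n = 0 then besselI 0 y * besselI 1 y / 2
  else (-1 : ℝ) ^ n * (μ + n) * Real.Gamma (2 * μ + n) * besselI (μ + n) y
    * besselI (μ + n + 1) y / (n.factorial : ℝ)

/-- A standard `d`-dimensional Brownian motion on a probability space `(Ω, P)`. -/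
structure IsBrownianMotion {Ω : Type*} [MeasurableSpace Ω] (P : Measure Ω) (d : ℕ)
    (B : ℝ → Ω → EuclideanSpace ℝ (Fin d)) : Prop where
  isProb : IsProbabilityMeasure P
  meas : ∀ t : ℝ, Measurable (B t)
  cont : ∀ᵐ ω ∂P, Continuous fun t : ℝ => B t ω
  init : ∀ᵐ ω ∂P, B 0 ω = 0
  indep_incr : ∀ (n : ℕ) (t : Fin (n + 1) → ℝ), Monotone t → (∀ i, 0 ≤ t i) →
    iIndepFun
      (fun i : Fin n => fun ω => B (t i.succ) ω - B (t i.castSucc) ω) P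
  gauss_coord : ∀ s t : ℝ, 0 ≤ s → s ≤ t → ∀ i : Fin d,
    Measure.map (fun ω => (B t ω - B s ω) i) P = gaussianReal 0 (Real.toNNReal (t - s))
  indep_coord : ∀ s t : ℝ, 0 ≤ s → s ≤ t →
    iIndepFun
      (fun (i : Fin d) (ω : Ω) => (B t ω - B s ω) i) P

/-- Hitting time of the closed ball of radius `r` by the drifted process `B(s)+sv` started
shifted by `x`. -/
noncomputable def hitTime {Ω : Type*} {d : ℕ} (B : ℝ → Ω → EuclideanSpace ℝ (Fin d))
    (v x : EuclideanSpace ℝ (Fin d)) (r : ℝ) (ω : Ω) : ℝ :=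
  sInf {s : ℝ | 0 ≤ s ∧ ‖B s ω + s • v + x‖ ≤ r}

/-- `L_v^d(t) = ∫_{ℝ^d ∖ D} P(τ_v(x) ≤ t) dx`. -/
noncomputable def sausageL {Ω : Type*} [MeasurableSpace Ω] (P : Measure Ω) {d : ℕ}
    (B : ℝ → Ω → EuclideanSpace ℝ (Fin d)) (v : EuclideanSpace ℝ (Fin d)) (r t : ℝ) : ℝ :=
  ∫ x in (Metric.closedBall (0 : EuclideanSpace ℝ (Fin d)) r)ᶜ,
    (P {ω | hitTime B v x r ω ≤ t}).toReal

/-- `Σ_v^m(t) = e^{-|v|² t / 2} L_0^m(t)`, where `L0` stands for `L_0^m`. -/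
noncomputable def sigmaV (vnorm : ℝ) (L0 : ℝ → ℝ) (t : ℝ) : ℝ :=
  Real.exp (-(vnorm ^ 2 * t / 2)) * L0 t

/-- `Σ̃_v^m(t)`. -/
noncomputable def sigmaTilde (vnorm : ℝ) (L0 : ℝ → ℝ) (t : ℝ) : ℝ :=
  sigmaV vnorm L0 t + vnorm ^ 2 * ∫ s in (0:ℝ)..t, sigmaV vnorm L0 s
    + vnorm ^ 4 / 4 * ∫ s in (0:ℝ)..t, (t - s) * sigmaV vnorm L0 s

/-- The function `F_μ(λ)` (depending on `|v|` and `r`). -/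
noncomputable def Fmu (vnorm r μ lam : ℝ) : ℝ :=
  Real.sqrt (2 * lam + vnorm ^ 2) / lam ^ 2
    * besselK (μ + 1) (r * Real.sqrt (2 * lam + vnorm ^ 2))
    / besselK μ (r * Real.sqrt (2 * lam + vnorm ^ 2))

/-- The Gegenbauer polynomial `C_n^μ(x)` for `μ > 0`. -/
noncomputable def gegenbauerC (μ : ℝ) (n : ℕ) (x : ℝ) : ℝ :=
  (1 / Real.Gamma μ) * ∑ m ∈ Finset.range (n / 2 + 1),
    (-1 : ℝ) ^ m * Real.Gamma (μ + n - m) / ((m.factorial : ℝ) * ((n - 2 * m).factorial : ℝ))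
      * (2 * x) ^ (n - 2 * m)

/-- The constant `N_v^d` (as a function of `|v|`), the linear growth rate of the expected
volume of the Wiener sausage with drift. -/
noncomputable def NvD (d : ℕ) (r y : ℝ) : ℝ :=
  if d = 2 then
    Real.pi * besselI 0 (r * y) / besselK 0 (r * y)
      + 2 * Real.pi * ∑' n : ℕ,
        (-1 : ℝ) ^ (n + 1) * besselI ((n : ℝ) + 1) (r * y) / besselK ((n : ℝ) + 1) (r * y)
  else
    Real.pi * sphereArea (d - 2) / y ^ ((d : ℝ) - 2) * ∑' n : ℕ,
      (-1 : ℝ) ^ n * (((d : ℝ) / 2 - 1) + n) * Real.Gamma (2 * ((d : ℝ) / 2 - 1) + n)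
        / (n.factorial : ℝ)
        * besselI (((d : ℝ) / 2 - 1) + n) (r * y) / besselK (((d : ℝ) / 2 - 1) + n) (r * y)

/-!
Termwise comparison with a series whose consecutive terms have ratio `O(1/n)`.
Since `Γ(k + ν + 1) ≥ k! Γ(ν + 1)`, the series of `I_ν(y)` is dominated by
`(y/2)^ν e^{(y/2)²} / Γ(ν + 1)`, so `|ξ_{μ,n}(y)|` decays like `(y/2)^{2n} / (n!)²` up to
polynomial factors. In the integral defining `K_ν(x)`, `cosh (ν t) ≤ e^{(k-1) t}` for
`|ν| + 1 ≤ k`, and `u^k e^{-x u / 2} ≤ k! (2/x)^k` at `u = e^t` give `K_ν(x) ≤ k! (2/x)^k`,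
while the integral over `(0, 1]` gives `K_ν(x) ≥ e^{-x cosh 1}`. Hence the ratio of Macdonald
functions grows at most like `n!` times a geometric factor, which the `(n!)²` absorbs.
-/

open scoped Nat

lemma Gamma_add_one_mul_factorial_le {ν : ℝ} (hν : 0 ≤ ν) (k : ℕ) :
    Gamma (ν + 1) * k ! ≤ Gamma (k + ν + 1) := by
  induction k with
  | zero => simp
  | succ k ih =>
    have hrec : Gamma ((k + 1 : ℕ) + ν + 1) = (k + ν + 1) * Gamma (k + ν + 1) := by
      rw [← Gamma_add_one (by positivity)]
      push_cast
      ring_nf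
    rw [hrec, Nat.factorial_succ, Nat.cast_mul, Nat.cast_succ, mul_left_comm]
    gcongr
    linarith

section BesselI

variable {ν y : ℝ}

lemma besselI_term_le (hν : 0 ≤ ν) (hy : 0 < y) (k : ℕ) :
    (y / 2) ^ (2 * (k : ℝ) + ν) / (k ! * Gamma (k + ν + 1))
      ≤ (y / 2) ^ ν / Gamma (ν + 1) * ((y / 2) ^ 2) ^ k / k ! := by
  have hΓ : 0 < Gamma (ν + 1) := Gamma_pos_of_pos (by linarith)
  have hpow : (y / 2) ^ (2 * (k : ℝ) + ν) = ((y / 2) ^ 2) ^ k * (y / 2) ^ ν := by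
    rw [rpow_add (by positivity), rpow_mul (by positivity)]
    norm_cast
  have hden : Gamma (ν + 1) * k ! ≤ k ! * Gamma (k + ν + 1) :=
    (Gamma_add_one_mul_factorial_le hν k).trans
      (le_mul_of_one_le_left (Gamma_pos_of_pos (by positivity)).le
        (Nat.one_le_cast.2 (Nat.factorial_pos k)))
  rw [hpow, show (y / 2) ^ ν / Gamma (ν + 1) * ((y / 2) ^ 2) ^ k / k !
      = ((y / 2) ^ 2) ^ k * (y / 2) ^ ν / (Gamma (ν + 1) * k !) by ring]
  gcongr

lemma besselI_nonneg (hν : 0 ≤ ν) (hy : 0 < y) : 0 ≤ besselI ν y :=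
  tsum_nonneg fun k ↦ by
    have := Gamma_pos_of_pos (show 0 < (k : ℝ) + ν + 1 by positivity)
    positivity

lemma besselI_le (hν : 0 ≤ ν) (hy : 0 < y) :
    besselI ν y ≤ (y / 2) ^ ν * exp ((y / 2) ^ 2) / Gamma (ν + 1) := by
  have hexp : HasSum (fun k : ℕ ↦ (y / 2) ^ ν / Gamma (ν + 1) * ((y / 2) ^ 2) ^ k / k !)
      ((y / 2) ^ ν / Gamma (ν + 1) * exp ((y / 2) ^ 2)) := by
    have h := (NormedSpace.expSeries_div_hasSum_exp (𝔸 := ℝ) ((y / 2) ^ 2)).mul_left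
      ((y / 2) ^ ν / Gamma (ν + 1))
    rw [← exp_eq_exp_ℝ] at h
    simpa only [mul_div_assoc] using h
  have hterm_nonneg (k : ℕ) : 0 ≤ (y / 2) ^ (2 * (k : ℝ) + ν) / (k ! * Gamma (k + ν + 1)) := by
    have := Gamma_pos_of_pos (show 0 < (k : ℝ) + ν + 1 by positivity)
    positivity
  calc besselI ν y ≤ (y / 2) ^ ν / Gamma (ν + 1) * exp ((y / 2) ^ 2) :=
        hasSum_le (besselI_term_le hν hy)
          (hexp.summable.of_nonneg_of_le hterm_nonneg (besselI_term_le hν hy)).hasSum hexp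
    _ = _ := by ring

end BesselI

/-- `|xiCoef μ n y|` with `I_{μ+n}(y)` replaced by its bound from `besselI_le`. -/
noncomputable def xiMajorant (μ y : ℝ) (n : ℕ) : ℝ :=
  (μ + n) * Gamma (2 * μ + n) * ((y / 2) ^ (μ + n) * exp ((y / 2) ^ 2) / Gamma (μ + n + 1)) ^ 2
    / n !

section Xi

variable {μ y : ℝ}

lemma abs_xiCoef_le_xiMajorant (hμ : 0 ≤ μ) (hy : 0 < y) {n : ℕ} (hn : n ≠ 0) :
    |xiCoef μ n y| ≤ xiMajorant μ y n := by
  have hn' : (0 : ℝ) < n := by positivity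
  have hΓ : 0 < Gamma (2 * μ + n) := Gamma_pos_of_pos (by positivity)
  have hμn : 0 < μ + n := by positivity
  simp only [xiCoef, hn, and_false, if_false, abs_div, abs_mul, abs_pow, abs_neg, abs_one, one_pow,
    one_mul, Nat.abs_cast, abs_of_pos hΓ, abs_of_pos hμn, sq_abs, xiMajorant]
  gcongr
  · exact besselI_nonneg (by positivity) hy
  · exact besselI_le (by positivity) hy

lemma xiMajorant_nonneg (hμ : 0 ≤ μ) (n : ℕ) : 0 ≤ xiMajorant μ y n := by
  have := Gamma_nonneg_of_nonneg (show 0 ≤ 2 * μ + n by positivity)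
  unfold xiMajorant
  positivity

lemma xiMajorant_succ_le (hμ : 0 ≤ μ) (hy : 0 < y) {n : ℕ} (hn : n ≠ 0) :
    xiMajorant μ y (n + 1) ≤ y ^ 2 / 2 / (n + 1) ^ 2 * xiMajorant μ y n := by
  have hn' : (0 : ℝ) < n := by positivity
  have hH : Gamma (μ + n + 1) ≠ 0 := (Gamma_pos_of_pos (by positivity)).ne'
  have hsucc : xiMajorant μ y (n + 1) = (2 * μ + n) * (y / 2) ^ 2 / ((μ + n + 1) * (n + 1)) *
      (Gamma (2 * μ + n) * ((y / 2) ^ (μ + n) * exp ((y / 2) ^ 2) / Gamma (μ + n + 1)) ^ 2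
        / (n ! : ℝ)) := by
    rw [xiMajorant, Nat.factorial_succ]
    push_cast
    rw [show 2 * μ + (n + 1) = 2 * μ + n + 1 by ring, Gamma_add_one (by positivity),
      show μ + (n + 1) + 1 = μ + n + 1 + 1 by ring, Gamma_add_one (by positivity),
      show μ + (n + 1) = μ + n + 1 by ring, rpow_add_one (by positivity)]
    field_simp
  rw [hsucc, xiMajorant, mul_assoc (μ + n), mul_div_assoc (μ + n), ← mul_assoc]
  have := Gamma_pos_of_pos (show 0 < 2 * μ + n by positivity)
  gcongr
  rw [div_mul_eq_mul_div, div_le_div_iff₀ (by positivity) (by positivity)]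
  have h₁ : 2 * μ + n ≤ 2 * (μ + n) := by linarith
  have h₂ : (n : ℝ) + 1 ≤ μ + n + 1 := by linarith
  have := mul_le_mul h₁ h₂ (by positivity) (by positivity)
  nlinarith [mul_le_mul_of_nonneg_left this (by positivity : (0 : ℝ) ≤ y ^ 2 * (n + 1))]

end Xi

section BesselK

variable {ν x : ℝ}

lemma besselK_integrand_nonneg (ν x t : ℝ) : 0 ≤ exp (-(x * cosh t)) * cosh (ν * t) := by
  positivity

lemma cosh_le_exp_abs (t : ℝ) : cosh t ≤ exp |t| := by
  rw [← cosh_abs, cosh_eq]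
  linarith [exp_le_exp.2 (show -|t| ≤ |t| by linarith [abs_nonneg t])]

lemma exp_div_two_le_cosh (t : ℝ) : exp t / 2 ≤ cosh t := by
  rw [cosh_eq]
  linarith [exp_pos (-t)]

lemma besselK_integrand_le {k : ℕ} (hx : 0 < x) (hk : |ν| + 1 ≤ k) {t : ℝ} (ht : 0 ≤ t) :
    exp (-(x * cosh t)) * cosh (ν * t) ≤ k ! * (2 / x) ^ k * exp (-t) := by
  have hpow : exp t ^ k * exp (-(x / 2 * exp t)) ≤ k ! * (2 / x) ^ k :=
    calc exp t ^ k * exp (-(x / 2 * exp t))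
        = (x / 2 * exp t) ^ k / k ! * exp (-(x / 2 * exp t)) * (k ! * (2 / x) ^ k) := by
          rw [show exp t ^ k = (x / 2 * exp t * (2 / x)) ^ k by field_simp, mul_pow]
          field_simp
      _ ≤ exp (x / 2 * exp t) * exp (-(x / 2 * exp t)) * (k ! * (2 / x) ^ k) := by
          gcongr
          exact pow_div_factorial_le_exp _ (by positivity) k
      _ = k ! * (2 / x) ^ k := by rw [← exp_add, add_neg_cancel, exp_zero, one_mul]
  have hcosh : cosh (ν * t) ≤ exp ((k - 1) * t) := by
    refine (cosh_le_exp_abs _).trans (exp_le_exp.2 ?_)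
    rw [abs_mul, abs_of_nonneg ht]
    gcongr
    linarith
  calc exp (-(x * cosh t)) * cosh (ν * t)
      ≤ exp (-(x / 2 * exp t)) * exp ((k - 1) * t) := by
        refine mul_le_mul (exp_le_exp.2 ?_) hcosh (by positivity) (by positivity)
        nlinarith [exp_div_two_le_cosh t]
    _ = exp (-t) * (exp t ^ k * exp (-(x / 2 * exp t))) := by
        rw [← exp_nat_mul, ← exp_add, ← exp_add, ← exp_add]
        ring_nf
    _ ≤ exp (-t) * (k ! * (2 / x) ^ k) := by gcongr
    _ = k ! * (2 / x) ^ k * exp (-t) := mul_comm _ _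

lemma integrableOn_exp_neg_mul_cosh_mul_cosh (hx : 0 < x) (ν : ℝ) :
    IntegrableOn (fun t ↦ exp (-(x * cosh t)) * cosh (ν * t)) (Ioi 0) := by
  obtain ⟨k, hk⟩ := exists_nat_ge (|ν| + 1)
  refine ((integrableOn_exp_neg_Ioi 0).const_mul (k ! * (2 / x) ^ k)).mono' ?_ ?_
  · exact Continuous.aestronglyMeasurable (by fun_prop)
  · filter_upwards [ae_restrict_mem measurableSet_Ioi] with t ht
    rw [norm_of_nonneg (besselK_integrand_nonneg ν x t)]
    simpa using besselK_integrand_le hx hk ht.le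

lemma besselK_nonneg (ν x : ℝ) : 0 ≤ besselK ν x :=
  setIntegral_nonneg measurableSet_Ioi fun t _ ↦ besselK_integrand_nonneg ν x t

lemma besselK_le {k : ℕ} (hx : 0 < x) (hk : |ν| + 1 ≤ k) : besselK ν x ≤ k ! * (2 / x) ^ k :=
  calc besselK ν x ≤ ∫ t in Ioi 0, k ! * (2 / x) ^ k * exp (-t) :=
        setIntegral_mono_on (integrableOn_exp_neg_mul_cosh_mul_cosh hx ν)
          ((integrableOn_exp_neg_Ioi 0).const_mul _) measurableSet_Ioi
          fun t ht ↦ besselK_integrand_le hx hk (le_of_lt ht)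
    _ = k ! * (2 / x) ^ k := by rw [integral_const_mul, integral_exp_neg_Ioi_zero, mul_one]

lemma exp_neg_mul_cosh_one_le_besselK (hx : 0 < x) (ν : ℝ) :
    exp (-(x * cosh 1)) ≤ besselK ν x := by
  have hint := integrableOn_exp_neg_mul_cosh_mul_cosh hx ν
  calc exp (-(x * cosh 1)) = ∫ _ in Ioc (0 : ℝ) 1, exp (-(x * cosh 1)) := by simp
    _ ≤ ∫ t in Ioc (0 : ℝ) 1, exp (-(x * cosh t)) * cosh (ν * t) := by
        refine setIntegral_mono_on (integrableOn_const (by simp))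
          (hint.mono_set Ioc_subset_Ioi_self) measurableSet_Ioc fun t ht ↦ ?_
        have hcosh : cosh t ≤ cosh 1 := by
          rw [cosh_le_cosh, abs_of_pos ht.1, abs_one]
          exact ht.2
        calc exp (-(x * cosh 1)) ≤ exp (-(x * cosh t)) * 1 := by
              rw [mul_one, exp_le_exp]
              nlinarith
          _ ≤ exp (-(x * cosh t)) * cosh (ν * t) := by gcongr; exact one_le_cosh _
    _ ≤ besselK ν x :=
        setIntegral_mono_set hint (.of_forall fun t ↦ besselK_integrand_nonneg ν x t)
          Ioc_subset_Ioi_self.eventuallyLE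

lemma besselK_div_besselK_le {k : ℕ} (hx : 0 < x) (hk : |ν| + 1 ≤ k) (ν' : ℝ) :
    besselK ν x / besselK ν' x ≤ k ! * (2 / x) ^ k * exp (x * cosh 1) := by
  calc besselK ν x / besselK ν' x ≤ k ! * (2 / x) ^ k / exp (-(x * cosh 1)) :=
        div_le_div₀ (by positivity) (besselK_le hx hk) (exp_pos _)
          (exp_neg_mul_cosh_one_le_besselK hx ν')
    _ = k ! * (2 / x) ^ k * exp (x * cosh 1) := by rw [exp_neg, div_inv_eq_mul]

end BesselK

lemma summable_of_norm_succ_le_div {E : Type*} [NormedAddCommGroup E] [CompleteSpace E]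
    {f : ℕ → E} (C : ℝ) (h : ∀ n : ℕ, ‖f (n + 1)‖ ≤ C / (n + 1) * ‖f n‖) : Summable f := by
  refine summable_of_ratio_norm_eventually_le one_half_lt_one ?_
  filter_upwards [eventually_ge_atTop ⌈2 * C⌉₊] with n hn
  refine (h n).trans (mul_le_mul_of_nonneg_right ?_ (norm_nonneg _))
  have hC : 2 * C ≤ n := (Nat.le_ceil _).trans (by exact_mod_cast hn)
  rw [div_le_iff₀ (by positivity)]
  linarith

lemma summable_xiMajorant_mul_factorial_mul_pow {μ y : ℝ} (hμ : 0 ≤ μ) (hy : 0 < y) (k : ℕ)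
    {r : ℝ} (hr : 0 ≤ r) :
    Summable fun n : ℕ ↦ xiMajorant μ y (n + 1) * ((n + k) ! * r ^ (n + k)) := by
  refine summable_of_norm_succ_le_div (y ^ 2 * (k + 1) * r / 2) fun n ↦ ?_
  have hxi := xiMajorant_succ_le hμ hy n.succ_ne_zero
  have hnonneg := xiMajorant_nonneg (y := y) hμ (n + 1)
  have hfac : ((n + 1 + k) ! : ℝ) * r ^ (n + 1 + k)
      = (n + k + 1) * r * ((n + k) ! * r ^ (n + k)) := by
    rw [show n + 1 + k = n + k + 1 by ring, Nat.factorial_succ, pow_succ]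
    push_cast
    ring
  push_cast at hxi
  rw [norm_of_nonneg (mul_nonneg (xiMajorant_nonneg hμ _) (by positivity)),
    norm_of_nonneg (mul_nonneg hnonneg (by positivity)), hfac]
  calc xiMajorant μ y (n + 1 + 1) * ((n + k + 1) * r * ((n + k) ! * r ^ (n + k)))
      ≤ y ^ 2 / 2 / (n + 1 + 1) ^ 2 * xiMajorant μ y (n + 1)
          * ((n + k + 1) * r * ((n + k) ! * r ^ (n + k))) := by gcongr
    _ = y ^ 2 * r / 2 * ((n + k + 1) / (n + 1 + 1) ^ 2)
          * (xiMajorant μ y (n + 1) * ((n + k) ! * r ^ (n + k))) := by ring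
    _ ≤ y ^ 2 * r / 2 * ((k + 1) / (n + 1))
          * (xiMajorant μ y (n + 1) * ((n + k) ! * r ^ (n + k))) := by
        gcongr y ^ 2 * r / 2 * ?_ * _
        rw [div_le_div_iff₀ (by positivity) (by positivity)]
        nlinarith [mul_nonneg (Nat.cast_nonneg (α := ℝ) n) (Nat.cast_nonneg (α := ℝ) k)]
    _ = y ^ 2 * (k + 1) * r / 2 / (n + 1)
          * (xiMajorant μ y (n + 1) * ((n + k) ! * r ^ (n + k))) := by ring

/-- Lemma 2.3, first claim. -/
theorem summable_xi_mul_besselK_ratio (μ x y : ℝ) (hμ : 0 ≤ μ) (hx : 0 < x) (hy : 0 < y) :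
    Summable fun n : ℕ =>
      |xiCoef μ (n + 1) y| * (besselK (μ + (n : ℝ) + 2) x / besselK (μ + (n : ℝ) + 1) x) := by
  obtain ⟨M, hM⟩ := exists_nat_ge μ
  have hbound (n : ℕ) :
      |xiCoef μ (n + 1) y| * (besselK (μ + n + 2) x / besselK (μ + n + 1) x)
        ≤ xiMajorant μ y (n + 1) * ((n + (M + 3)) ! * (2 / x) ^ (n + (M + 3)))
          * exp (x * cosh 1) := by
    rw [mul_assoc]
    have hk : |μ + n + 2| + 1 ≤ ((n + (M + 3) : ℕ) : ℝ) := by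
      rw [abs_of_nonneg (by positivity)]
      push_cast
      linarith
    exact mul_le_mul (abs_xiCoef_le_xiMajorant hμ hy n.succ_ne_zero)
      (besselK_div_besselK_le hx hk _)
      (div_nonneg (besselK_nonneg _ _) (besselK_nonneg _ _)) (xiMajorant_nonneg hμ _)
  refine ((summable_xiMajorant_mul_factorial_mul_pow hμ hy (M + 3) (by positivity)).mul_right
    (exp (x * cosh 1))).of_nonneg_of_le (fun n ↦ ?_) hbound
  exact mul_nonneg (abs_nonneg _) (div_nonneg (besselK_nonneg _ _) (besselK_nonneg _ _))
end

section
/- For every x > 0 and every μ ≥ 1/2, the Macdonald function satisfies K_μ(x) ≥ (2^{μ−1}/x^μ) Γ(μ) e^{−x}. -/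
open MeasureTheory ProbabilityTheory Real Filter Set
open scoped ENNReal NNReal Topology

/-!
Substituting `s = (x/2) eᵗ` in `∫ e^{-x cosh t} e^{μt} dt`, which is `2 K_μ(x)` by evenness, gives
`2 K_μ(x) = (2/x)^μ e^{-x} M(x)` with `M(x) = ∫₀^∞ s^{μ-1} e^{x - s - x²/(4s)} ds` and `M(0) = Γ(μ)`,
so it suffices that `M` increases on `[0, ∞)`. The exponent `x - s - x²/(4s) = -(√s - x/(2√s))²`
is invariant under the involution `s ↦ x²/(4s)`. Pairing `s` with its image, the integrand of
`M'(x)` combines into `s^{μ-1} e^{x - s - x²/(4s)} (1 - r)(1 - r^{2μ-1})` with `r = x/(2s)`, which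
is nonnegative because `2μ - 1 ≥ 0`.
-/

open scoped Nat

theorem exp_neg_le_factorial_div_pow {t : ℝ} (ht : 0 < t) (n : ℕ) :
    exp (-t) ≤ n ! / t ^ n := by
  rw [exp_neg, inv_le_comm₀ (exp_pos _) (by positivity), inv_div]
  exact pow_div_factorial_le_exp t ht.le n

theorem integrableOn_rpow_mul_exp_neg_sub_div (a : ℝ) {c : ℝ} (hc : 0 < c) :
    IntegrableOn (fun s => s ^ a * exp (-s - c / s)) (Ioi 0) := by
  obtain ⟨n, hn⟩ := exists_nat_gt (-a)
  refine ((GammaIntegral_convergent (s := a + n + 1) (by linarith)).const_mul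
    (n ! / c ^ n)).mono' (by fun_prop) ?_
  refine (ae_restrict_iff' measurableSet_Ioi).mpr (ae_of_all _ fun s (hs : 0 < s) => ?_)
  have hdecay : exp (-(c / s)) ≤ n ! / c ^ n * s ^ n :=
    (exp_neg_le_factorial_div_pow (div_pos hc hs) n).trans_eq (by rw [div_pow]; field_simp)
  rw [norm_of_nonneg (by positivity)]
  calc s ^ a * exp (-s - c / s) = s ^ a * exp (-s) * exp (-(c / s)) := by
        rw [sub_eq_add_neg, exp_add]; ring
    _ ≤ s ^ a * exp (-s) * (n ! / c ^ n * s ^ n) := by gcongr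
    _ = n ! / c ^ n * (exp (-s) * s ^ (a + n + 1 - 1)) := by
        rw [add_sub_cancel_right, rpow_add hs, rpow_natCast]; ring

theorem integral_Ioi_nonneg_of_add_comp_div_nonneg {F : ℝ → ℝ} {c : ℝ} (hc : 0 < c)
    (hF : ∀ s > 0, 0 ≤ F s + c / s ^ 2 * F (c / s)) : 0 ≤ ∫ s in Ioi 0, F s := by
  by_cases hint : IntegrableOn F (Ioi 0)
  swap
  · rw [integral_undef hint]
  have himage : (fun s => c / s) '' Ioi 0 = Ioi 0 := by
    ext t
    refine ⟨?_, fun (ht : 0 < t) => ⟨c / t, div_pos hc ht, div_div_cancel₀ hc.ne'⟩⟩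
    rintro ⟨s, hs, rfl⟩
    exact div_pos hc hs
  have hderiv :
      ∀ s ∈ Ioi (0 : ℝ), HasDerivWithinAt (fun s => c / s) (-(c / s ^ 2)) (Ioi 0) s :=
    fun s hs => by
      simpa [div_eq_mul_inv] using ((hasDerivAt_inv (ne_of_gt hs)).const_mul c).hasDerivWithinAt
  have hinj : InjOn (fun s => c / s) (Ioi 0) := fun a _ b _ h => by
    simpa [div_div_cancel₀ hc.ne'] using congrArg (c / ·) h
  have hsub := integral_image_eq_integral_abs_deriv_smul measurableSet_Ioi hderiv hinj F
  have hint' := (integrableOn_image_iff_integrableOn_abs_deriv_smul measurableSet_Ioi hderiv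
    hinj F).mp (by rwa [himage])
  rw [himage] at hsub
  have hsum : 0 ≤ ∫ s in Ioi 0, (F s + |-(c / s ^ 2)| • F (c / s)) :=
    setIntegral_nonneg measurableSet_Ioi fun s (hs : 0 < s) => by
      rw [abs_neg, abs_of_pos (by positivity), smul_eq_mul]
      exact hF s hs
  rw [integral_add hint hint', ← hsub] at hsum
  linarith

theorem image_univ_mul_exp {a : ℝ} (ha : 0 < a) : (fun t => a * exp t) '' univ = Ioi 0 := by
  ext s
  refine ⟨?_, fun (hs : 0 < s) => ⟨log (s / a), trivial, ?_⟩⟩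
  · rintro ⟨t, -, rfl⟩
    exact mul_pos ha (exp_pos t)
  · simp only [exp_log (div_pos hs ha)]
    field_simp

theorem one_sub_mul_one_sub_rpow_nonneg {r p : ℝ} (hr : 0 < r) (hp : 0 ≤ p) :
    0 ≤ (1 - r) * (1 - r ^ p) := by
  rcases le_total r 1 with h | h
  · exact mul_nonneg (by linarith) (sub_nonneg.mpr (rpow_le_one hr.le h hp))
  · exact mul_nonneg_of_nonpos_of_nonpos (by linarith) (sub_nonpos.mpr (one_le_rpow h hp))

theorem besselK_eq_half_integral {μ x : ℝ}
    (hint : Integrable fun t => exp (-(x * cosh t)) * exp (μ * t)) :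
    besselK μ x = (∫ t, exp (-(x * cosh t)) * exp (μ * t)) / 2 := by
  have heven : ∫ t, exp (-(x * cosh t)) * cosh (μ * t) = 2 * besselK μ x := by
    rw [besselK, ← integral_comp_abs]
    congr 1 with t
    rcases abs_choice t with ht | ht <;> simp [ht]
  have hsplit : ∫ t, exp (-(x * cosh t)) * cosh (μ * t) =
      ((∫ t, exp (-(x * cosh t)) * exp (μ * t)) +
        ∫ t, exp (-(x * cosh (-t))) * exp (μ * -t)) / 2 := by
    rw [← integral_add hint hint.comp_neg, ← integral_div]
    congr 1 with t
    rw [cosh_neg, cosh_eq (μ * t), mul_neg]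
    ring
  rw [integral_neg_eq_self (fun t => exp (-(x * cosh t)) * exp (μ * t))] at hsplit
  linarith

noncomputable def macdonaldKernel (μ x s : ℝ) : ℝ :=
  s ^ (μ - 1) * exp (x - s - x ^ 2 / (4 * s))

noncomputable def macdonaldIntegral (μ x : ℝ) : ℝ :=
  ∫ s in Ioi 0, macdonaldKernel μ x s

theorem integrableOn_macdonaldKernel (μ : ℝ) {x : ℝ} (hx : x ≠ 0) :
    IntegrableOn (macdonaldKernel μ x) (Ioi 0) := by
  refine IntegrableOn.congr_fun ((integrableOn_rpow_mul_exp_neg_sub_div (μ - 1)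
    (c := x ^ 2 / 4) (by positivity)).const_mul (exp x)) (fun s _ => ?_) measurableSet_Ioi
  rw [macdonaldKernel, mul_left_comm, ← exp_add, div_div]
  ring_nf

theorem macdonaldIntegral_zero {μ : ℝ} (hμ : 0 < μ) : macdonaldIntegral μ 0 = Gamma μ := by
  rw [Gamma_eq_integral hμ, macdonaldIntegral]
  refine setIntegral_congr_fun measurableSet_Ioi fun s _ => ?_
  simp [macdonaldKernel, mul_comm]

theorem mul_exp_mul_macdonaldKernel (μ t : ℝ) {x : ℝ} (hx : 0 < x) :
    x / 2 * exp t * macdonaldKernel μ x (x / 2 * exp t) =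
      (x / 2) ^ μ * exp x * (exp (-(x * cosh t)) * exp (μ * t)) := by
  have hu : 0 < x / 2 * exp t := by positivity
  have hpow : x / 2 * exp t * (x / 2 * exp t) ^ (μ - 1) = (x / 2) ^ μ * exp (μ * t) := by
    rw [rpow_sub_one hu.ne', mul_div_cancel₀ _ hu.ne', mul_rpow (by positivity) (exp_pos t).le,
      ← exp_mul, mul_comm t]
  have hexp : x - x / 2 * exp t - x ^ 2 / (4 * (x / 2 * exp t)) = x + -(x * cosh t) := by
    rw [cosh_eq, exp_neg]
    field_simp
    ring
  rw [macdonaldKernel, hexp, exp_add]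
  linear_combination exp x * exp (-(x * cosh t)) * hpow

theorem macdonaldIntegral_eq_integral_exp_neg_mul_cosh {μ x : ℝ} (hx : 0 < x) :
    (Integrable fun t => exp (-(x * cosh t)) * exp (μ * t)) ∧
      macdonaldIntegral μ x =
        (x / 2) ^ μ * exp x * ∫ t, exp (-(x * cosh t)) * exp (μ * t) := by
  have ha : 0 < x / 2 := half_pos hx
  have hderiv : ∀ t ∈ univ, HasDerivWithinAt (fun t => x / 2 * exp t) (x / 2 * exp t) univ t :=
    fun t _ => ((hasDerivAt_exp t).const_mul _).hasDerivWithinAt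
  have hinj : InjOn (fun t => x / 2 * exp t) univ :=
    ((mul_right_injective₀ ha.ne').comp exp_injective).injOn
  have hsub : ∀ t, |x / 2 * exp t| • macdonaldKernel μ x (x / 2 * exp t) =
      (x / 2) ^ μ * exp x * (exp (-(x * cosh t)) * exp (μ * t)) := fun t => by
    rw [abs_of_pos (by positivity), smul_eq_mul, mul_exp_mul_macdonaldKernel μ t hx]
  constructor
  · have h := (integrableOn_image_iff_integrableOn_abs_deriv_smul MeasurableSet.univ hderiv
      hinj _).mp (by rw [image_univ_mul_exp ha]; exact integrableOn_macdonaldKernel μ hx.ne')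
    simp_rw [hsub, integrableOn_univ] at h
    exact (integrable_const_mul_iff (isUnit_iff_ne_zero.mpr (by positivity)) _).mp h
  · rw [macdonaldIntegral, ← image_univ_mul_exp ha,
      integral_image_eq_integral_abs_deriv_smul MeasurableSet.univ hderiv hinj, setIntegral_univ]
    simp_rw [hsub]
    exact integral_const_mul _ _

theorem besselK_eq_macdonaldIntegral (μ : ℝ) {x : ℝ} (hx : 0 < x) :
    besselK μ x = macdonaldIntegral μ x / (2 * (x / 2) ^ μ * exp x) := by
  obtain ⟨hint, hM⟩ := macdonaldIntegral_eq_integral_exp_neg_mul_cosh (μ := μ) hx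
  rw [besselK_eq_half_integral hint, hM]
  field_simp

theorem continuous_macdonaldIntegral {μ : ℝ} (hμ : 0 < μ) :
    Continuous (macdonaldIntegral μ) := by
  refine continuous_iff_continuousAt.mpr fun x₀ => continuousAt_of_dominated
    (bound := fun s => exp (x₀ + 1) * (exp (-s) * s ^ (μ - 1)))
    (Eventually.of_forall fun _ => by unfold macdonaldKernel; fun_prop) ?_
    ((GammaIntegral_convergent hμ).const_mul _)
    (ae_of_all _ fun s => by unfold macdonaldKernel; fun_prop)
  filter_upwards [Metric.ball_mem_nhds x₀ one_pos] with x hx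
  refine (ae_restrict_iff' measurableSet_Ioi).mpr (ae_of_all _ fun s (hs : 0 < s) => ?_)
  have hx' : x < x₀ + 1 := by rw [Metric.mem_ball, dist_eq, abs_lt] at hx; linarith
  have hexp : exp (x - s - x ^ 2 / (4 * s)) ≤ exp (x₀ + 1) * exp (-s) := by
    rw [← exp_add, exp_le_exp]
    linarith [show 0 ≤ x ^ 2 / (4 * s) by positivity]
  rw [macdonaldKernel, norm_of_nonneg (by positivity)]
  calc s ^ (μ - 1) * exp (x - s - x ^ 2 / (4 * s))
      ≤ s ^ (μ - 1) * (exp (x₀ + 1) * exp (-s)) := by gcongr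
    _ = exp (x₀ + 1) * (exp (-s) * s ^ (μ - 1)) := by ring

theorem abs_macdonaldKernel_mul_one_sub_le (μ : ℝ) {x y s : ℝ} (hs : 0 < s) (hx₁ : y / 2 < x)
    (hx₂ : x < 2 * y) :
    |macdonaldKernel μ x s * (1 - x / (2 * s))| ≤
      exp (2 * y) * (s ^ (μ - 1) * exp (-s - y ^ 2 / 16 / s) +
        y * (s ^ (μ - 1 - 1) * exp (-s - y ^ 2 / 16 / s))) := by
  have hy : 0 < y := by linarith
  have hx₀ : 0 < x := by linarith
  have hexp : exp (x - s - x ^ 2 / (4 * s)) ≤ exp (2 * y) * exp (-s - y ^ 2 / 16 / s) := by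
    have : y ^ 2 / 16 / s ≤ x ^ 2 / 4 / s := by gcongr ?_ / _; nlinarith
    rw [← exp_add, exp_le_exp, ← div_div]
    linarith
  have hfac : |1 - x / (2 * s)| ≤ 1 + y / s := by
    have : x / (2 * s) ≤ y / s := by rw [div_le_div_iff₀ (by positivity) hs]; nlinarith
    rw [abs_le]
    constructor <;> linarith [show 0 ≤ x / (2 * s) by positivity, show 0 ≤ y / s by positivity]
  rw [macdonaldKernel, abs_mul, abs_mul, abs_of_nonneg (rpow_nonneg hs.le _),
    abs_of_pos (exp_pos _), rpow_sub_one hs.ne' (μ - 1)]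
  calc s ^ (μ - 1) * exp (x - s - x ^ 2 / (4 * s)) * |1 - x / (2 * s)|
      ≤ s ^ (μ - 1) * (exp (2 * y) * exp (-s - y ^ 2 / 16 / s)) * (1 + y / s) := by gcongr
    _ = _ := by ring

theorem hasDerivAt_macdonaldIntegral (μ : ℝ) {y : ℝ} (hy : 0 < y) :
    HasDerivAt (macdonaldIntegral μ)
      (∫ s in Ioi 0, macdonaldKernel μ y s * (1 - y / (2 * s))) y := by
  have hc : 0 < y ^ 2 / 16 := by positivity
  have hint := integrableOn_rpow_mul_exp_neg_sub_div (μ - 1) hc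
  have hint' := integrableOn_rpow_mul_exp_neg_sub_div (μ - 1 - 1) hc
  refine (hasDerivAt_integral_of_dominated_loc_of_deriv_le
    (Metric.ball_mem_nhds y (half_pos hy)) (F := macdonaldKernel μ)
    (F' := fun x s => macdonaldKernel μ x s * (1 - x / (2 * s)))
    (Eventually.of_forall fun _ => by unfold macdonaldKernel; fun_prop)
    (integrableOn_macdonaldKernel μ hy.ne') (by unfold macdonaldKernel; fun_prop) ?_
    ((hint.add (hint'.const_mul y)).const_mul (exp (2 * y))) ?_).2
  · refine (ae_restrict_iff' measurableSet_Ioi).mpr (ae_of_all _ fun s (hs : 0 < s) x hx => ?_)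
    rw [Metric.mem_ball, dist_eq, abs_lt] at hx
    exact abs_macdonaldKernel_mul_one_sub_le μ hs (by linarith) (by linarith)
  · refine ae_of_all _ fun s x _ => ?_
    have h : HasDerivAt (fun x => x - s - x ^ 2 / (4 * s)) (1 - x / (2 * s)) x := by
      refine (((hasDerivAt_id' x).sub_const s).sub
        ((hasDerivAt_pow 2 x).div_const (4 * s))).congr_deriv ?_
      norm_num
      ring
    exact (h.exp.const_mul (s ^ (μ - 1))).congr_deriv (by rw [macdonaldKernel]; ring)

theorem macdonaldKernel_sq_div (μ : ℝ) {x s : ℝ} (hx : 0 < x) (hs : 0 < s) :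
    macdonaldKernel μ x (x ^ 2 / 4 / s) =
      (x / (2 * s)) ^ (2 * μ - 2) * macdonaldKernel μ x s := by
  have hpow : (x ^ 2 / 4 / s) ^ (μ - 1) = (x / (2 * s)) ^ (2 * μ - 2) * s ^ (μ - 1) := by
    rw [show x ^ 2 / 4 / s = (x / (2 * s)) ^ 2 * s by field_simp; ring,
      mul_rpow (by positivity) hs.le, ← rpow_natCast, ← rpow_mul (by positivity)]
    push_cast
    ring_nf
  have hexp : x - x ^ 2 / 4 / s - x ^ 2 / (4 * (x ^ 2 / 4 / s)) = x - s - x ^ 2 / (4 * s) := by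
    field_simp
    ring
  rw [macdonaldKernel, macdonaldKernel, hpow, hexp]
  ring

theorem macdonaldKernel_deriv_pair_nonneg {μ x s : ℝ} (hμ : 1 / 2 ≤ μ) (hx : 0 < x)
    (hs : 0 < s) :
    0 ≤ macdonaldKernel μ x s * (1 - x / (2 * s)) + x ^ 2 / 4 / s ^ 2 *
      (macdonaldKernel μ x (x ^ 2 / 4 / s) * (1 - x / (2 * (x ^ 2 / 4 / s)))) := by
  have hr : 0 < x / (2 * s) := by positivity
  have hK : 0 ≤ macdonaldKernel μ x s := by unfold macdonaldKernel; positivity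
  rw [macdonaldKernel_sq_div μ hx hs, show 2 * μ - 2 = 2 * μ - 1 - 1 by ring,
    rpow_sub_one hr.ne']
  refine le_of_le_of_eq
    (mul_nonneg hK (one_sub_mul_one_sub_rpow_nonneg hr (p := 2 * μ - 1) (by linarith))) ?_
  generalize (x / (2 * s)) ^ (2 * μ - 1) = q
  field_simp
  ring

theorem monotoneOn_macdonaldIntegral {μ : ℝ} (hμ : 1 / 2 ≤ μ) :
    MonotoneOn (macdonaldIntegral μ) (Ici 0) := by
  refine monotoneOn_of_deriv_nonneg (convex_Ici 0)
    (continuous_macdonaldIntegral (by linarith)).continuousOn ?_ ?_ <;> rw [interior_Ici]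
  · exact fun y hy => (hasDerivAt_macdonaldIntegral μ hy).differentiableAt.differentiableWithinAt
  · intro y (hy : 0 < y)
    rw [(hasDerivAt_macdonaldIntegral μ hy).deriv]
    exact integral_Ioi_nonneg_of_add_comp_div_nonneg (c := y ^ 2 / 4) (by positivity)
      fun s hs => macdonaldKernel_deriv_pair_nonneg hμ hy hs

theorem Gamma_le_macdonaldIntegral {μ x : ℝ} (hμ : 1 / 2 ≤ μ) (hx : 0 ≤ x) :
    Gamma μ ≤ macdonaldIntegral μ x := by
  rw [← macdonaldIntegral_zero (by linarith : 0 < μ)]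
  exact monotoneOn_macdonaldIntegral hμ self_mem_Ici hx hx

/-- Lemma 2.5, inequality (2.4): lower bound for the Macdonald function. -/
theorem besselK_lower_bound (μ x : ℝ) (hμ : 1 / 2 ≤ μ) (hx : 0 < x) :
    besselK μ x ≥ 2 ^ (μ - 1) / x ^ μ * Real.Gamma μ * Real.exp (-x) := by
  rw [ge_iff_le, besselK_eq_macdonaldIntegral μ hx]
  calc 2 ^ (μ - 1) / x ^ μ * Gamma μ * exp (-x) = Gamma μ / (2 * (x / 2) ^ μ * exp x) := by
        rw [div_rpow hx.le zero_le_two, rpow_sub_one two_ne_zero, exp_neg]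
        field_simp
    _ ≤ macdonaldIntegral μ x / (2 * (x / 2) ^ μ * exp x) := by
        gcongr
        exact Gamma_le_macdonaldIntegral hμ hx.le
end

section
/- For every μ ≥ 1/2 and every x > 0, ∫_0^∞ e^{−y} y^{μ−1/2} (1 + y/(2x))^{μ−1/2} dy ≤ 4 (1 + 1/(2x))^{μ−1/2} Γ(2μ). -/
/-!
Since `y (1 + y/a) ≤ (1 + 1/a) (1 + y)²`, the integrand is at most
`(1 + 1/a)^p e^{-y} (1 + y)^{2p}` with `a = 2x`, `p = μ - 1/2`. Shifting `y ↦ y + 1` turns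
`∫₀^∞ e^{-y} (1 + y)^{2μ-1} dy` into `e ∫₁^∞ e^{-u} u^{2μ-1} du ≤ e Γ(2μ)`, and `e ≤ 4`.
-/

open MeasureTheory ProbabilityTheory Real Filter Set
open scoped ENNReal NNReal Topology

lemma measurePreserving_add_right_restrict_Ioi (a b : ℝ) :
    MeasurePreserving (MeasurableEquiv.addRight b) (volume.restrict (Ioi a))
      (volume.restrict (Ioi (a + b))) := by
  simpa using (measurePreserving_add_right volume b).restrict_preimage
    (measurableSet_Ioi (a := a + b))

lemma integrableOn_Ioi_comp_add_right {E : Type*} [NormedAddCommGroup E] {f : ℝ → E} {a b : ℝ}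
    (hf : IntegrableOn f (Ioi (a + b))) :
    IntegrableOn (fun y => f (y + b)) (Ioi a) :=
  ((measurePreserving_add_right_restrict_Ioi a b).integrable_comp_emb
    (MeasurableEquiv.measurableEmbedding _)).2 hf

lemma setIntegral_Ioi_comp_add_right {E : Type*} [NormedAddCommGroup E] [NormedSpace ℝ E]
    (f : ℝ → E) (a b : ℝ) :
    ∫ y in Ioi a, f (y + b) = ∫ y in Ioi (a + b), f y :=
  (measurePreserving_add_right_restrict_Ioi a b).integral_comp' f

lemma exp_neg_mul_one_add_rpow_eq_exp_one_mul (s y : ℝ) :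
    exp (-y) * (1 + y) ^ (s - 1) = exp 1 * (exp (-(y + 1)) * (y + 1) ^ (s - 1)) := by
  rw [← mul_assoc, ← exp_add, add_comm y 1]
  ring_nf

lemma integrableOn_exp_neg_mul_one_add_rpow {s : ℝ} (hs : 0 < s) :
    IntegrableOn (fun y => exp (-y) * (1 + y) ^ (s - 1)) (Ioi 0) := by
  simp_rw [exp_neg_mul_one_add_rpow_eq_exp_one_mul s]
  refine (integrableOn_Ioi_comp_add_right (f := fun u => exp (-u) * u ^ (s - 1)) ?_).const_mul _
  exact (GammaIntegral_convergent hs).mono_set (Ioi_subset_Ioi (by norm_num))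

lemma integral_exp_neg_mul_one_add_rpow_le {s : ℝ} (hs : 0 < s) :
    ∫ y in Ioi 0, exp (-y) * (1 + y) ^ (s - 1) ≤ exp 1 * Gamma s := by
  simp_rw [exp_neg_mul_one_add_rpow_eq_exp_one_mul s]
  rw [integral_const_mul, setIntegral_Ioi_comp_add_right (fun u => exp (-u) * u ^ (s - 1)),
    Gamma_eq_integral hs, zero_add]
  refine mul_le_mul_of_nonneg_left (setIntegral_mono_set (GammaIntegral_convergent hs) ?_
    (Ioi_subset_Ioi zero_le_one).eventuallyLE) (exp_pos 1).le
  filter_upwards [ae_restrict_mem measurableSet_Ioi] with u (hu : 0 < u)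
  positivity

lemma rpow_mul_one_add_div_rpow_le {p a y : ℝ} (hp : 0 ≤ p) (ha : 0 ≤ a) (hy : 0 ≤ y) :
    y ^ p * (1 + y / a) ^ p ≤ (1 + 1 / a) ^ p * (1 + y) ^ (2 * p) := by
  have hbase : y * (1 + y / a) ≤ (1 + 1 / a) * (1 + y) ^ 2 := by
    have : y ^ 2 / a ≤ (1 + y) ^ 2 / a := by gcongr; linarith
    calc y * (1 + y / a) = y + y ^ 2 / a := by ring
      _ ≤ (1 + y) ^ 2 + (1 + y) ^ 2 / a := by nlinarith
      _ = (1 + 1 / a) * (1 + y) ^ 2 := by ring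
  rw [← mul_rpow hy (by positivity), rpow_mul (by positivity), rpow_two,
    ← mul_rpow (by positivity) (by positivity)]
  exact rpow_le_rpow (by positivity) hbase hp

/-- Inequality (2.6). -/
theorem integral_bound_26 (μ x : ℝ) (hμ : 1 / 2 ≤ μ) (hx : 0 < x) :
    (∫ y in Set.Ioi (0 : ℝ), Real.exp (-y) * y ^ (μ - 1 / 2) * (1 + y / (2 * x)) ^ (μ - 1 / 2))
      ≤ 4 * (1 + 1 / (2 * x)) ^ (μ - 1 / 2) * Real.Gamma (2 * μ) := by
  have hs : 0 < 2 * μ := by linarith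
  have hexp : 2 * (μ - 1 / 2) = 2 * μ - 1 := by ring
  set C := (1 + 1 / (2 * x)) ^ (μ - 1 / 2)
  have hdom : ∀ y ∈ Ioi (0 : ℝ), exp (-y) * y ^ (μ - 1 / 2) * (1 + y / (2 * x)) ^ (μ - 1 / 2)
      ≤ C * (exp (-y) * (1 + y) ^ (2 * μ - 1)) := fun y (hy : 0 < y) => by
    rw [mul_assoc, mul_left_comm C, ← hexp]
    exact mul_le_mul_of_nonneg_left
      (rpow_mul_one_add_div_rpow_le (by linarith) (by positivity) hy.le) (exp_pos _).le
  calc (∫ y in Ioi 0, exp (-y) * y ^ (μ - 1 / 2) * (1 + y / (2 * x)) ^ (μ - 1 / 2))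
      ≤ ∫ y in Ioi 0, C * (exp (-y) * (1 + y) ^ (2 * μ - 1)) := by
        refine integral_mono_of_nonneg ?_ ((integrableOn_exp_neg_mul_one_add_rpow hs).const_mul C)
          ((ae_restrict_iff' measurableSet_Ioi).2 (.of_forall hdom))
        filter_upwards [ae_restrict_mem measurableSet_Ioi] with y (hy : 0 < y)
        positivity
    _ = C * ∫ y in Ioi 0, exp (-y) * (1 + y) ^ (2 * μ - 1) := integral_const_mul C _
    _ ≤ C * (exp 1 * Gamma (2 * μ)) := by gcongr; exact integral_exp_neg_mul_one_add_rpow_le hs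
    _ = exp 1 * (C * Gamma (2 * μ)) := by ring
    _ ≤ 4 * (C * Gamma (2 * μ)) := by
        have hΓ := Gamma_pos_of_pos hs
        gcongr
        linarith [exp_one_lt_d9]
    _ = 4 * C * Gamma (2 * μ) := by ring
end

section
/- Let μ ≥ 0 be a real number. For every integer n ≥ 1, Γ(2μ+n)/Γ(μ+n)² ≤ (2^{μ−1} Γ(2μ+1)/Γ(μ+1)²) · 2^n/Γ(n). -/
open MeasureTheory ProbabilityTheory Real Filter Set
open scoped ENNReal NNReal Topology

section GammaRatio

variable {μ : ℝ}

/-- One step of the recursion `Γ(z + 1) = z Γ(z)`: the factor `(2μ + x) / (μ + x)²` it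
produces is at most `1 / x` by AM–GM. -/
theorem gamma_ratio_add_one_le (hμ : 0 ≤ μ) {x : ℝ} (hx : 0 < x) :
    Real.Gamma (2 * μ + (x + 1)) / Real.Gamma (μ + (x + 1)) ^ 2
      ≤ Real.Gamma (2 * μ + x) / Real.Gamma (μ + x) ^ 2 / x := by
  have hΓ : 0 < Real.Gamma (2 * μ + x) / Real.Gamma (μ + x) ^ 2 := by
    have := Real.Gamma_pos_of_pos (show 0 < 2 * μ + x by positivity)
    have := Real.Gamma_pos_of_pos (show 0 < μ + x by positivity)
    positivity
  have hfactor : (2 * μ + x) / (μ + x) ^ 2 ≤ 1 / x := by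
    rw [div_le_div_iff₀ (by positivity) hx]
    nlinarith [sq_nonneg μ]
  calc Real.Gamma (2 * μ + (x + 1)) / Real.Gamma (μ + (x + 1)) ^ 2
      = (2 * μ + x) / (μ + x) ^ 2 * (Real.Gamma (2 * μ + x) / Real.Gamma (μ + x) ^ 2) := by
        rw [← add_assoc, ← add_assoc, Real.Gamma_add_one (by positivity),
          Real.Gamma_add_one (by positivity), mul_pow, mul_div_mul_comm]
    _ ≤ 1 / x * (Real.Gamma (2 * μ + x) / Real.Gamma (μ + x) ^ 2) := by gcongr
    _ = Real.Gamma (2 * μ + x) / Real.Gamma (μ + x) ^ 2 / x := one_div_mul_eq_div _ _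

theorem gamma_ratio_le_div_gamma (hμ : 0 ≤ μ) {n : ℕ} (hn : 1 ≤ n) :
    Real.Gamma (2 * μ + n) / Real.Gamma (μ + n) ^ 2
      ≤ Real.Gamma (2 * μ + 1) / Real.Gamma (μ + 1) ^ 2 / Real.Gamma n := by
  induction n, hn using Nat.le_induction with
  | base => simp
  | succ n hn ih =>
    have hn' : (0 : ℝ) < n := by exact_mod_cast hn
    push_cast
    calc Real.Gamma (2 * μ + (n + 1)) / Real.Gamma (μ + (n + 1)) ^ 2
        ≤ Real.Gamma (2 * μ + n) / Real.Gamma (μ + n) ^ 2 / n :=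
          gamma_ratio_add_one_le hμ hn'
      _ ≤ Real.Gamma (2 * μ + 1) / Real.Gamma (μ + 1) ^ 2 / Real.Gamma n / n := by gcongr
      _ = Real.Gamma (2 * μ + 1) / Real.Gamma (μ + 1) ^ 2 / Real.Gamma (n + 1) := by
        rw [Real.Gamma_add_one hn'.ne', div_div, mul_comm (Real.Gamma _)]

end GammaRatio

/-- Lemma 2.6: bound on a ratio of Gamma functions. -/
theorem gamma_ratio_bound (μ : ℝ) (hμ : 0 ≤ μ) (n : ℕ) (hn : 1 ≤ n) :
    Real.Gamma (2 * μ + n) / Real.Gamma (μ + n) ^ 2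
      ≤ 2 ^ (μ - 1) * Real.Gamma (2 * μ + 1) / Real.Gamma (μ + 1) ^ 2
        * ((2 : ℝ) ^ n / Real.Gamma n) := by
  have hΓ : 0 ≤ Real.Gamma (2 * μ + 1) / Real.Gamma (μ + 1) ^ 2 / Real.Gamma n := by
    have := Real.Gamma_pos_of_pos (show 0 < 2 * μ + 1 by positivity)
    have := Real.Gamma_pos_of_pos (show (0 : ℝ) < n by exact_mod_cast hn)
    positivity
  have hpow : 1 ≤ (2 : ℝ) ^ (μ - 1) * 2 ^ n := by
    rw [← Real.rpow_natCast, ← Real.rpow_add two_pos]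
    exact Real.one_le_rpow one_le_two (by linarith [(by exact_mod_cast hn : (1 : ℝ) ≤ n)])
  calc Real.Gamma (2 * μ + n) / Real.Gamma (μ + n) ^ 2
      ≤ Real.Gamma (2 * μ + 1) / Real.Gamma (μ + 1) ^ 2 / Real.Gamma n :=
        gamma_ratio_le_div_gamma hμ hn
    _ ≤ (2 ^ (μ - 1) * 2 ^ n)
          * (Real.Gamma (2 * μ + 1) / Real.Gamma (μ + 1) ^ 2 / Real.Gamma n) :=
        le_mul_of_one_le_left hΓ hpow
    _ = 2 ^ (μ - 1) * Real.Gamma (2 * μ + 1) / Real.Gamma (μ + 1) ^ 2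
          * ((2 : ℝ) ^ n / Real.Gamma n) := by ring
end

section
/- For every μ ≥ 1/2 and all real numbers a ≥ b > 0, K_μ(a)/K_μ(b) ≤ 4 (2b+1)^μ e^{−a+b}. -/
open MeasureTheory ProbabilityTheory Real Filter Set
open scoped ENNReal NNReal Topology

/-!
Since `cosh t ≥ 1`, for `a ≥ b` the integrands satisfy
`e^{-a cosh t} ≤ e^{-(a - b)} e^{-b cosh t}`, so `K_μ(a) ≤ e^{-a + b} K_μ(b)`;
the factor `4 (2b + 1)^μ` is at least `1` once `μ ≥ 0`. Finiteness and positivity of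
`K_μ` come from `cosh t ≥ t² / 8`, which dominates the integrand by `e^{-x t² / 8} cosh (μ t)`.
-/

lemma integrable_exp_neg_mul_sq_add_mul {b : ℝ} (hb : 0 < b) (c : ℝ) :
    Integrable fun t : ℝ => exp (-b * t ^ 2 + c * t) := by
  have hshift : Integrable fun t : ℝ => exp (-b * (t - c / (2 * b)) ^ 2) :=
    (integrable_exp_neg_mul_sq hb).comp_sub_right _
  refine (hshift.const_mul (exp (c ^ 2 / (4 * b)))).congr (Eventually.of_forall fun t => ?_)
  simp only [← exp_add]
  congr 1
  field_simp
  ring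

lemma integrable_exp_neg_mul_sq_mul_cosh {b : ℝ} (hb : 0 < b) (μ : ℝ) :
    Integrable fun t : ℝ => exp (-b * t ^ 2) * cosh (μ * t) := by
  refine ((integrable_exp_neg_mul_sq_add_mul hb μ).add
    (integrable_exp_neg_mul_sq_add_mul hb (-μ))).div_const 2 |>.congr
    (Eventually.of_forall fun t => ?_)
  simp only [Pi.add_apply, cosh_eq, exp_add, neg_mul, exp_neg]
  ring

lemma sq_div_eight_le_cosh (t : ℝ) : t ^ 2 / 8 ≤ cosh t := by
  rw [← cosh_abs, cosh_eq]
  have hhalf := add_one_le_exp (|t| / 2)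
  have hsq : (|t| / 2 + 1) ^ 2 ≤ exp |t| := by
    calc (|t| / 2 + 1) ^ 2 ≤ exp (|t| / 2) ^ 2 := by gcongr
      _ = exp |t| := by rw [sq, ← exp_add, add_halves]
  nlinarith [abs_nonneg t, sq_abs t, exp_pos (-|t|)]

lemma integrable_exp_neg_mul_cosh_mul_cosh (μ : ℝ) {x : ℝ} (hx : 0 < x) :
    Integrable fun t : ℝ => exp (-(x * cosh t)) * cosh (μ * t) := by
  refine (integrable_exp_neg_mul_sq_mul_cosh (by positivity : 0 < x / 8) μ).mono'
    (by fun_prop) (Eventually.of_forall fun t => ?_)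
  rw [norm_of_nonneg (by positivity)]
  gcongr
  nlinarith [sq_div_eight_le_cosh t]

lemma besselK_pos (μ : ℝ) {x : ℝ} (hx : 0 < x) : 0 < besselK μ x := by
  rw [besselK, setIntegral_pos_iff_support_of_nonneg_ae
    (Eventually.of_forall fun t => by positivity)
    (integrable_exp_neg_mul_cosh_mul_cosh μ hx).integrableOn]
  have hsupp : Function.support (fun t => exp (-(x * cosh t)) * cosh (μ * t)) = univ :=
    Function.support_eq_univ fun t => by positivity
  simp [hsupp]

lemma besselK_le_exp_mul (μ : ℝ) {a b : ℝ} (hb : 0 < b) (hab : b ≤ a) :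
    besselK μ a ≤ exp (-a + b) * besselK μ b := by
  rw [besselK, besselK, ← integral_const_mul]
  refine integral_mono_of_nonneg (Eventually.of_forall fun t => by positivity)
    ((integrable_exp_neg_mul_cosh_mul_cosh μ hb).integrableOn.const_mul _)
    (Eventually.of_forall fun t => ?_)
  have hexp : exp (-(a * cosh t)) ≤ exp (-a + b) * exp (-(b * cosh t)) := by
    rw [← exp_add, exp_le_exp]
    nlinarith [one_le_cosh t]
  calc exp (-(a * cosh t)) * cosh (μ * t)
      ≤ exp (-a + b) * exp (-(b * cosh t)) * cosh (μ * t) := by gcongr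
    _ = _ := mul_assoc _ _ _

/-- Bound for `K_μ(a)/K_μ(b)` when `a ≥ b > 0`. -/
theorem besselK_ratio_two_points (μ a b : ℝ) (hμ : 1 / 2 ≤ μ) (hb : 0 < b) (hab : b ≤ a) :
    besselK μ a / besselK μ b ≤ 4 * (2 * b + 1) ^ μ * Real.exp (-a + b) := by
  have hfactor : 1 ≤ 4 * (2 * b + 1) ^ μ := by
    nlinarith [one_le_rpow (by linarith : (1 : ℝ) ≤ 2 * b + 1) (by linarith : (0 : ℝ) ≤ μ)]
  calc besselK μ a / besselK μ b ≤ exp (-a + b) :=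
        (div_le_iff₀ (besselK_pos μ hb)).mpr (besselK_le_exp_mul μ hb hab)
    _ ≤ 4 * (2 * b + 1) ^ μ * exp (-a + b) := le_mul_of_one_le_left (exp_pos _).le hfactor
end

section
/- Let μ > 0, let n ≥ 1 be an integer, and let x > 0. Then ∫_0^π e^{−x cos θ} C_n^μ(cos θ) sin^{2μ} θ dθ = (2^μ (−1)^n √π Γ(μ+1/2) Γ(2μ+n) / (n! Γ(2μ))) · I_{μ+n}(x) / x^μ. -/
open MeasureTheory ProbabilityTheory Real Filter Set
open scoped ENNReal NNReal Topology

/-!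
Expand `exp (-x cos θ)` in its power series and integrate termwise. The moments
`∫₀^π cos^k θ · C_n^μ(cos θ) · sin^{2μ} θ dθ` inherit the three-term recurrence of the
Gegenbauer polynomials, so they are determined by the cases `n = 0, 1`, which are Beta integrals.
They vanish unless `k = n + 2j`, and the surviving terms of the series are, up to a constant,
the terms of the power series of `(x/2)^{-μ} I_{μ+n}(x)`.
-/

lemma Gamma_eq_mul_Gamma_of_eq_add_one {s t : ℝ} (h : s = t + 1) (ht : t ≠ 0) :
    Gamma s = t * Gamma t := by
  rw [h, Gamma_add_one ht]

lemma integral_Ioo_rpow_mul_one_sub_rpow {a b : ℝ} (ha : 0 < a) (hb : 0 < b) :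
    ∫ s in Ioo (0 : ℝ) 1, s ^ (a - 1) * (1 - s) ^ (b - 1)
      = Gamma a * Gamma b / Gamma (a + b) := by
  have hB := Complex.Gamma_mul_Gamma_eq_betaIntegral (s := a) (t := b)
    (by simpa using ha) (by simpa using hb)
  have hβ : Complex.betaIntegral a b
      = ((∫ s in (0 : ℝ)..1, s ^ (a - 1) * (1 - s) ^ (b - 1) : ℝ) : ℂ) := by
    rw [Complex.betaIntegral, ← intervalIntegral.integral_ofReal]
    refine intervalIntegral.integral_congr fun s hs => ?_
    rw [uIcc_of_le zero_le_one] at hs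
    rw [Complex.ofReal_mul, Complex.ofReal_cpow hs.1, Complex.ofReal_cpow (sub_nonneg.2 hs.2)]
    push_cast
    ring
  rw [hβ, ← Complex.ofReal_add, Complex.Gamma_ofReal, Complex.Gamma_ofReal, Complex.Gamma_ofReal,
    ← Complex.ofReal_mul, ← Complex.ofReal_mul, Complex.ofReal_inj,
    intervalIntegral.integral_of_le zero_le_one, integral_Ioc_eq_integral_Ioo] at hB
  rw [hB, mul_div_cancel_left₀ _ (Gamma_pos_of_pos (add_pos ha hb)).ne']

lemma Gamma_nat_add_half_eq_factorial (q : ℕ) :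
    Gamma (q + 1 / 2) = √π * (2 * q).factorial / (4 ^ q * q.factorial) := by
  have hfac : ((2 * q).factorial : ℝ) = 2 ^ q * q.factorial * (2 * q - 1).doubleFactorial := by
    rcases q with _ | q
    · simp
    · rw [show 2 * (q + 1) = (2 * q + 1) + 1 by ring, Nat.factorial_eq_mul_doubleFactorial,
        show 2 * q + 1 + 1 = 2 * (q + 1) by ring, Nat.doubleFactorial_two_mul,
        show 2 * (q + 1) - 1 = 2 * q + 1 by omega]
      push_cast
      ring
  rw [Real.Gamma_nat_add_half, hfac,
    show (4 : ℝ) ^ q = 2 ^ q * 2 ^ q by rw [← mul_pow]; norm_num]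
  field_simp

lemma image_sin_sq_Ioo : (fun θ => sin θ ^ 2) '' Ioo 0 (π / 2) = Ioo 0 1 := by
  ext s
  constructor
  · rintro ⟨θ, hθ, rfl⟩
    have h0 : 0 < sin θ := sin_pos_of_pos_of_lt_pi hθ.1 (by linarith [hθ.2, pi_pos])
    have h1 : sin θ < 1 := by
      rw [← sin_pi_div_two]
      exact strictMonoOn_sin ⟨by linarith [hθ.1, pi_pos], hθ.2.le⟩
        ⟨by linarith [pi_pos], le_rfl⟩ hθ.2
    exact ⟨by positivity, by nlinarith⟩
  · rintro ⟨hs0, hs1⟩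
    refine ⟨arcsin √s, ⟨arcsin_pos.2 (sqrt_pos.2 hs0), arcsin_lt_pi_div_two.2 ?_⟩, ?_⟩
    · rwa [sqrt_lt' one_pos, one_pow]
    · dsimp only
      rw [sin_arcsin (by linarith [sqrt_nonneg s]) (sqrt_le_one.2 hs1.le), sq_sqrt hs0.le]

lemma injOn_sin_sq : InjOn (fun θ => sin θ ^ 2) (Ioo 0 (π / 2)) := by
  intro a ha b hb hab
  have hmem : ∀ {θ}, θ ∈ Ioo 0 (π / 2) → θ ∈ Icc (-(π / 2)) (π / 2) :=
    fun hθ => ⟨by linarith [hθ.1, pi_pos], hθ.2.le⟩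
  have hpos : ∀ {θ}, θ ∈ Ioo 0 (π / 2) → 0 ≤ sin θ :=
    fun hθ => sin_nonneg_of_nonneg_of_le_pi hθ.1.le (by linarith [hθ.2, pi_pos])
  exact injOn_sin (hmem ha) (hmem hb) ((pow_left_inj₀ (hpos ha) (hpos hb) two_ne_zero).1 hab)

lemma mul_rpow_sq_sub_half {s : ℝ} (hs : 0 < s) (t : ℝ) :
    s * (s ^ 2) ^ (t - 1 / 2) = s ^ (2 * t) := by
  calc s * (s ^ 2) ^ (t - 1 / 2) = s ^ (1 : ℝ) * s ^ ((2 : ℕ) * (t - 1 / 2)) := by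
        rw [rpow_one, rpow_mul hs.le, rpow_natCast]
    _ = s ^ (2 * t) := by rw [← rpow_add hs]; ring_nf

/-- The substitution `s = sin² θ` turns this into the Beta integral `B(μ + 1/2, q + 1/2) / 2`. -/
lemma integral_Ioo_cos_pow_mul_sin_rpow {μ : ℝ} (hμ : -(1 / 2) < μ) (q : ℕ) :
    ∫ θ in Ioo 0 (π / 2), cos θ ^ (2 * q) * sin θ ^ (2 * μ)
      = Gamma (μ + 1 / 2) * Gamma (q + 1 / 2) / Gamma (μ + q + 1) / 2 := by
  have hB := integral_Ioo_rpow_mul_one_sub_rpow (a := μ + 1 / 2) (b := q + 1 / 2)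
    (by linarith) (by positivity)
  rw [← image_sin_sq_Ioo, integral_image_eq_integral_abs_deriv_smul measurableSet_Ioo
    (f' := fun θ => 2 * sin θ * cos θ)
    (fun θ _ => by simpa using ((hasDerivAt_sin θ).fun_pow 2).hasDerivWithinAt) injOn_sin_sq,
    show μ + 1 / 2 + (q + 1 / 2) = μ + q + 1 by ring] at hB
  rw [← hB, ← integral_div]
  refine setIntegral_congr_fun measurableSet_Ioo fun θ hθ => ?_
  have hs : 0 < sin θ := sin_pos_of_pos_of_lt_pi hθ.1 (by linarith [hθ.2, pi_pos])
  have hc : 0 < cos θ := cos_pos_of_mem_Ioo ⟨by linarith [hθ.1, pi_pos], hθ.2⟩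
  have hsin := mul_rpow_sq_sub_half hs μ
  have hcos := mul_rpow_sq_sub_half hc q
  rw [show 2 * (q : ℝ) = ((2 * q : ℕ) : ℝ) by push_cast; ring, rpow_natCast] at hcos
  simp only [smul_eq_mul, ← cos_sq', abs_of_pos (by positivity : 0 < 2 * sin θ * cos θ)]
  rw [show μ + 1 / 2 - 1 = μ - 1 / 2 by ring, show (q : ℝ) + 1 / 2 - 1 = q - 1 / 2 by ring,
    ← hsin, ← hcos]
  ring

lemma continuous_sin_rpow {μ : ℝ} (hμ : 0 ≤ μ) : Continuous fun θ => sin θ ^ (2 * μ) :=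
  continuous_sin.rpow_const fun _ => Or.inr (by positivity)

/-- Reflection `θ ↦ π - θ` fixes `sin` and negates `cos`. -/
lemma integral_cos_pow_mul_sin_rpow {μ : ℝ} (hμ : 0 ≤ μ) (p : ℕ) :
    ∫ θ in 0..π, cos θ ^ p * sin θ ^ (2 * μ)
      = (1 + (-1) ^ p) * ∫ θ in 0..π / 2, cos θ ^ p * sin θ ^ (2 * μ) := by
  have hint : ∀ a b, IntervalIntegrable (fun θ => cos θ ^ p * sin θ ^ (2 * μ)) volume a b :=
    fun a b => ((continuous_cos.pow p).mul (continuous_sin_rpow hμ)).intervalIntegrable a b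
  have hreflect : ∫ θ in π / 2..π, cos θ ^ p * sin θ ^ (2 * μ)
      = (-1) ^ p * ∫ θ in 0..π / 2, cos θ ^ p * sin θ ^ (2 * μ) := by
    have h := intervalIntegral.integral_comp_sub_left
      (fun θ => cos θ ^ p * sin θ ^ (2 * μ)) (a := 0) (b := π / 2) π
    rw [sub_zero, show π - π / 2 = π / 2 by ring] at h
    rw [← h, ← intervalIntegral.integral_const_mul]
    refine intervalIntegral.integral_congr fun θ _ => ?_
    simp only [cos_pi_sub, sin_pi_sub, neg_pow (cos θ)]
    ring
  rw [← intervalIntegral.integral_add_adjacent_intervals (hint 0 (π / 2)) (hint (π / 2) π),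
    hreflect]
  ring

lemma integral_cos_pow_mul_sin_rpow_of_odd {μ : ℝ} (hμ : 0 ≤ μ) {p : ℕ} (hp : Odd p) :
    ∫ θ in 0..π, cos θ ^ p * sin θ ^ (2 * μ) = 0 := by
  rw [integral_cos_pow_mul_sin_rpow hμ, hp.neg_one_pow, add_neg_cancel, zero_mul]

lemma integral_cos_pow_two_mul_mul_sin_rpow {μ : ℝ} (hμ : 0 ≤ μ) (q : ℕ) :
    ∫ θ in 0..π, cos θ ^ (2 * q) * sin θ ^ (2 * μ)
      = √π * Gamma (μ + 1 / 2) * (2 * q).factorial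
          / (4 ^ q * q.factorial * Gamma (q + μ + 1)) := by
  rw [integral_cos_pow_mul_sin_rpow hμ, intervalIntegral.integral_of_le (by positivity),
    integral_Ioc_eq_integral_Ioo, integral_Ioo_cos_pow_mul_sin_rpow (by linarith) q,
    Gamma_nat_add_half_eq_factorial, pow_mul, neg_one_sq, one_pow,
    show μ + (q : ℝ) + 1 = q + μ + 1 by ring]
  field_simp
  ring

/-- The coefficient of `(2y)^(n-2m)` in `Γ(μ) C_n^μ(y)`, extended by zero beyond `m = n / 2`. -/
noncomputable def gegenbauerCoeff (μ : ℝ) (n m : ℕ) : ℝ :=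
  if 2 * m ≤ n then (-1) ^ m * Gamma (μ + n - m) / (m.factorial * (n - 2 * m).factorial) else 0

lemma gegenbauerC_eq_sum_range (μ : ℝ) {n N : ℕ} (hN : n / 2 < N) (y : ℝ) :
    gegenbauerC μ n y
      = (Gamma μ)⁻¹
        * ∑ m ∈ Finset.range N, gegenbauerCoeff μ n m * (2 * y) ^ (n - 2 * m) := by
  have hzero : ∀ m ∈ Finset.range N, m ∉ Finset.range (n / 2 + 1) →
      gegenbauerCoeff μ n m * (2 * y) ^ (n - 2 * m) = 0 := fun m _ hm => by
    rw [gegenbauerCoeff, if_neg (by grind), zero_mul]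
  rw [gegenbauerC, one_div, ← Finset.sum_subset (Finset.range_subset_range.2 (by omega)) hzero]
  refine congrArg _ (Finset.sum_congr rfl fun m hm => ?_)
  rw [gegenbauerCoeff, if_pos (by grind)]

lemma gegenbauerC_zero {μ : ℝ} (hμ : 0 < μ) (y : ℝ) : gegenbauerC μ 0 y = 1 := by
  simp [gegenbauerC, (Gamma_pos_of_pos hμ).ne']

lemma gegenbauerC_one {μ : ℝ} (hμ : 0 < μ) (y : ℝ) : gegenbauerC μ 1 y = 2 * μ * y := by
  simp [gegenbauerC, Gamma_add_one hμ.ne', (Gamma_pos_of_pos hμ).ne', mul_comm, mul_left_comm,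
    mul_assoc]

lemma gegenbauerCoeff_add_two_zero {μ : ℝ} (hμ : 0 < μ) (n : ℕ) :
    (n + 2) * gegenbauerCoeff μ (n + 2) 0 = (n + 1 + μ) * gegenbauerCoeff μ (n + 1) 0 := by
  simp only [gegenbauerCoeff, if_pos (Nat.zero_le _), mul_zero, Nat.sub_zero, Nat.cast_zero,
    sub_zero, pow_zero, Nat.factorial_zero, Nat.cast_one, one_mul]
  rw [Gamma_eq_mul_Gamma_of_eq_add_one (t := μ + (n + 1 : ℕ)) (by push_cast; ring)
    (by positivity), Nat.factorial_succ (n + 1)]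
  push_cast
  field_simp
  ring

lemma gegenbauerCoeff_add_two_succ {μ : ℝ} (hμ : 0 < μ) (n m : ℕ) :
    (n + 2) * gegenbauerCoeff μ (n + 2) (m + 1)
      = (n + 1 + μ) * gegenbauerCoeff μ (n + 1) (m + 1)
        - (n + 2 * μ) * gegenbauerCoeff μ n m := by
  rcases lt_or_ge n (2 * m) with h | h
  · simp [gegenbauerCoeff, show ¬2 * (m + 1) ≤ n + 2 by omega,
      show ¬2 * (m + 1) ≤ n + 1 by omega, show ¬2 * m ≤ n by omega]
  obtain ⟨r, rfl⟩ := Nat.exists_eq_add_of_le h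
  have hΓ₂ : Gamma (μ + (2 * m + r + 2 : ℕ) - (m + 1 : ℕ))
      = (μ + m + r) * Gamma (μ + m + r) :=
    Gamma_eq_mul_Gamma_of_eq_add_one (by push_cast; ring) (by positivity)
  have hΓ₁ : Gamma (μ + (2 * m + r + 1 : ℕ) - (m + 1 : ℕ)) = Gamma (μ + m + r) :=
    congrArg Gamma (by push_cast; ring)
  have hΓ₀ : Gamma (μ + (2 * m + r : ℕ) - m) = Gamma (μ + m + r) :=
    congrArg Gamma (by push_cast; ring)
  simp only [gegenbauerCoeff]
  rcases r with _ | r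
  · rw [if_pos (by omega), if_neg (by omega), if_pos (by omega), hΓ₂, hΓ₀,
      show 2 * m + 0 + 2 - 2 * (m + 1) = 0 by omega, show 2 * m + 0 - 2 * m = 0 by omega,
      Nat.factorial_succ m, pow_succ]
    push_cast
    field_simp
    ring
  · rw [if_pos (by omega), if_pos (by omega), if_pos (by omega), hΓ₂, hΓ₁, hΓ₀,
      show 2 * m + (r + 1) + 2 - 2 * (m + 1) = r + 1 by omega,
      show 2 * m + (r + 1) + 1 - 2 * (m + 1) = r by omega,
      show 2 * m + (r + 1) - 2 * m = r + 1 by omega,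
      Nat.factorial_succ m, Nat.factorial_succ r, pow_succ]
    push_cast
    field_simp
    ring

theorem gegenbauerC_add_two {μ : ℝ} (hμ : 0 < μ) (n : ℕ) (y : ℝ) :
    (n + 2) * gegenbauerC μ (n + 2) y
      = 2 * (n + 1 + μ) * y * gegenbauerC μ (n + 1) y - (n + 2 * μ) * gegenbauerC μ n y := by
  have hshift : ∀ m,
      2 * y * (gegenbauerCoeff μ (n + 1) (m + 1) * (2 * y) ^ (n + 1 - 2 * (m + 1)))
        = gegenbauerCoeff μ (n + 1) (m + 1) * (2 * y) ^ (n - 2 * m) := by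
    intro m
    by_cases hm : 2 * (m + 1) ≤ n + 1
    · rw [mul_left_comm, ← pow_succ', show n + 1 - 2 * (m + 1) + 1 = n - 2 * m by omega]
    · simp [gegenbauerCoeff, if_neg hm]
  have hsum : (n + 2) * ∑ m ∈ Finset.range (n / 2 + 1),
        gegenbauerCoeff μ (n + 2) (m + 1) * (2 * y) ^ (n + 2 - 2 * (m + 1))
      = (n + 1 + μ) * (2 * y) * ∑ m ∈ Finset.range (n / 2 + 1),
          gegenbauerCoeff μ (n + 1) (m + 1) * (2 * y) ^ (n + 1 - 2 * (m + 1))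
        - (n + 2 * μ) * ∑ m ∈ Finset.range (n / 2 + 1),
          gegenbauerCoeff μ n m * (2 * y) ^ (n - 2 * m) := by
    simp only [Finset.mul_sum, ← Finset.sum_sub_distrib]
    refine Finset.sum_congr rfl fun m _ => ?_
    rw [show n + 2 - 2 * (m + 1) = n - 2 * m by omega, mul_assoc _ (2 * y), hshift]
    linear_combination (2 * y) ^ (n - 2 * m) * gegenbauerCoeff_add_two_succ hμ n m
  have hsplit : ∀ k, k / 2 < n / 2 + 2 → gegenbauerC μ k y = (Gamma μ)⁻¹ *
      (∑ m ∈ Finset.range (n / 2 + 1),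
          gegenbauerCoeff μ k (m + 1) * (2 * y) ^ (k - 2 * (m + 1))
        + gegenbauerCoeff μ k 0 * (2 * y) ^ k) := fun k hk => by
    rw [gegenbauerC_eq_sum_range μ hk, Finset.sum_range_succ', mul_zero, Nat.sub_zero]
  rw [hsplit (n + 2) (by omega), hsplit (n + 1) (by omega),
    gegenbauerC_eq_sum_range μ (N := n / 2 + 1) (by omega)]
  linear_combination
    (Gamma μ)⁻¹ * (hsum + (2 * y) ^ (n + 2) * gegenbauerCoeff_add_two_zero hμ n)

noncomputable def gegenbauerMoment (μ : ℝ) (n k : ℕ) : ℝ :=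
  ∫ θ in 0..π, cos θ ^ k * gegenbauerC μ n (cos θ) * sin θ ^ (2 * μ)

lemma continuous_gegenbauerC (μ : ℝ) (n : ℕ) : Continuous (gegenbauerC μ n) := by
  unfold gegenbauerC
  fun_prop

lemma gegenbauerMoment_zero {μ : ℝ} (hμ : 0 < μ) (k : ℕ) :
    gegenbauerMoment μ 0 k = ∫ θ in 0..π, cos θ ^ k * sin θ ^ (2 * μ) := by
  simp only [gegenbauerMoment, gegenbauerC_zero hμ, mul_one]

lemma gegenbauerMoment_one {μ : ℝ} (hμ : 0 < μ) (k : ℕ) :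
    gegenbauerMoment μ 1 k = 2 * μ * ∫ θ in 0..π, cos θ ^ (k + 1) * sin θ ^ (2 * μ) := by
  simp only [gegenbauerMoment, gegenbauerC_one hμ, ← intervalIntegral.integral_const_mul]
  congr 1 with θ
  ring

lemma gegenbauerMoment_add_two {μ : ℝ} (hμ : 0 < μ) (n k : ℕ) :
    (n + 2) * gegenbauerMoment μ (n + 2) k
      = 2 * (n + 1 + μ) * gegenbauerMoment μ (n + 1) (k + 1)
        - (n + 2 * μ) * gegenbauerMoment μ n k := by
  have hint : ∀ n k, IntervalIntegrable
      (fun θ => cos θ ^ k * gegenbauerC μ n (cos θ) * sin θ ^ (2 * μ)) volume 0 π :=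
    fun n k => (((continuous_cos.pow k).mul ((continuous_gegenbauerC μ n).comp continuous_cos)).mul
      (continuous_sin_rpow hμ.le)).intervalIntegrable 0 π
  simp only [gegenbauerMoment, ← intervalIntegral.integral_const_mul,
    ← intervalIntegral.integral_sub ((hint _ _).const_mul _) ((hint _ _).const_mul _)]
  congr 1 with θ
  linear_combination cos θ ^ k * sin θ ^ (2 * μ) * gegenbauerC_add_two hμ n (cos θ)

noncomputable def gegenbauerMomentFormula (μ : ℝ) (n k : ℕ) : ℝ :=
  if n ≤ k ∧ Even (k - n) then
    √π * Gamma (μ + 1 / 2) * Gamma (2 * μ + n) * k.factorial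
      / (2 ^ k * n.factorial * ((k - n) / 2).factorial * Gamma (2 * μ)
        * Gamma (((k + n) / 2 : ℕ) + μ + 1))
  else 0

lemma gegenbauerMomentFormula_of_eq_add_two_mul (μ : ℝ) {n k j : ℕ} (hk : k = n + 2 * j) :
    gegenbauerMomentFormula μ n k
      = √π * Gamma (μ + 1 / 2) * Gamma (2 * μ + n) * k.factorial
        / (2 ^ k * n.factorial * j.factorial * Gamma (2 * μ)
          * Gamma ((n + j : ℕ) + μ + 1)) := by
  subst hk
  rw [gegenbauerMomentFormula, if_pos ⟨by omega, by simp⟩,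
    show (n + 2 * j - n) / 2 = j by omega,
    show (n + 2 * j + n) / 2 = n + j by omega]

lemma gegenbauerMomentFormula_of_lt (μ : ℝ) {n k : ℕ} (h : k < n) :
    gegenbauerMomentFormula μ n k = 0 :=
  if_neg fun h' => absurd h'.1 (by omega)

lemma gegenbauerMomentFormula_of_odd (μ : ℝ) {n k : ℕ} (h : Odd (k + n)) :
    gegenbauerMomentFormula μ n k = 0 :=
  if_neg fun ⟨hle, heven⟩ => by
    rw [Nat.odd_iff] at h
    rw [Nat.even_iff] at heven
    omega

lemma Gamma_two_mul_add_nat_succ {μ : ℝ} (hμ : 0 < μ) (n : ℕ) :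
    Gamma (2 * μ + (n + 1 : ℕ)) = (2 * μ + n) * Gamma (2 * μ + n) :=
  Gamma_eq_mul_Gamma_of_eq_add_one (by push_cast; ring) (by positivity)

lemma gegenbauerMomentFormula_succ_self {μ : ℝ} (hμ : 0 < μ) (n : ℕ) :
    2 * (n + 1 + μ) * gegenbauerMomentFormula μ (n + 1) (n + 1)
      = (n + 2 * μ) * gegenbauerMomentFormula μ n n := by
  have hΓ : Gamma ((n + 1 : ℕ) + μ + 1) = ((n : ℕ) + μ + 1) * Gamma ((n : ℕ) + μ + 1) :=
    Gamma_eq_mul_Gamma_of_eq_add_one (by push_cast; ring) (by positivity)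
  rw [gegenbauerMomentFormula_of_eq_add_two_mul μ (n := n + 1) (j := 0) (by ring),
    gegenbauerMomentFormula_of_eq_add_two_mul μ (n := n) (j := 0) (by ring)]
  simp only [add_zero, Gamma_two_mul_add_nat_succ hμ, hΓ, Nat.factorial_succ]
  push_cast
  field_simp
  ring

lemma gegenbauerMomentFormula_add_two_add_two_mul {μ : ℝ} (hμ : 0 < μ) (n i : ℕ) :
    (n + 2) * gegenbauerMomentFormula μ (n + 2) (n + 2 + 2 * i)
      = 2 * (n + 1 + μ) * gegenbauerMomentFormula μ (n + 1) (n + 2 + 2 * i + 1)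
        - (n + 2 * μ) * gegenbauerMomentFormula μ n (n + 2 + 2 * i) := by
  have hΓ : Gamma ((n + 2 + i : ℕ) + μ + 1)
      = ((n + (i + 1) : ℕ) + μ + 1) * Gamma ((n + (i + 1) : ℕ) + μ + 1) :=
    Gamma_eq_mul_Gamma_of_eq_add_one (by push_cast; ring) (by positivity)
  rw [gegenbauerMomentFormula_of_eq_add_two_mul μ (n := n + 2) (j := i) rfl,
    gegenbauerMomentFormula_of_eq_add_two_mul μ (n := n + 1) (j := i + 1) (by ring),
    gegenbauerMomentFormula_of_eq_add_two_mul μ (n := n) (j := i + 1) (by ring),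
    show n + 1 + (i + 1) = n + 2 + i by ring, Gamma_two_mul_add_nat_succ hμ (n + 1),
    Gamma_two_mul_add_nat_succ hμ, hΓ]
  simp only [Nat.factorial_succ, show n + 2 + 2 * i = (n + 2 * i + 1) + 1 by ring, pow_succ]
  push_cast
  field_simp
  ring

lemma gegenbauerMomentFormula_add_two {μ : ℝ} (hμ : 0 < μ) (n k : ℕ) :
    (n + 2) * gegenbauerMomentFormula μ (n + 2) k
      = 2 * (n + 1 + μ) * gegenbauerMomentFormula μ (n + 1) (k + 1)
        - (n + 2 * μ) * gegenbauerMomentFormula μ n k := by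
  rcases lt_or_ge k n with hk | hk
  · simp [gegenbauerMomentFormula_of_lt μ hk, gegenbauerMomentFormula_of_lt μ (k := k + 1)
      (n := n + 1) (by omega), gegenbauerMomentFormula_of_lt μ (k := k) (n := n + 2) (by omega)]
  rcases Nat.even_or_odd (k + n) with ⟨j, hj⟩ | ⟨t, ht⟩
  · obtain ⟨i, rfl⟩ : ∃ i, k = n + 2 * i := ⟨j - n, by omega⟩
    rcases i with _ | i
    · simp only [Nat.mul_zero, Nat.add_zero]
      rw [gegenbauerMomentFormula_of_lt μ (by omega), mul_zero,
        gegenbauerMomentFormula_succ_self hμ, sub_self]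
    · rw [show n + 2 * (i + 1) = n + 2 + 2 * i by ring,
        gegenbauerMomentFormula_add_two_add_two_mul hμ]
  · rw [gegenbauerMomentFormula_of_odd μ ⟨t, ht⟩,
      gegenbauerMomentFormula_of_odd μ (n := n + 1) (k := k + 1) ⟨t + 1, by omega⟩,
      gegenbauerMomentFormula_of_odd μ (n := n + 2) ⟨t + 1, by omega⟩]
    ring

lemma integral_cos_pow_mul_sin_rpow_eq_formula {μ : ℝ} (hμ : 0 < μ) (k : ℕ) :
    ∫ θ in 0..π, cos θ ^ k * sin θ ^ (2 * μ) = gegenbauerMomentFormula μ 0 k := by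
  rcases Nat.even_or_odd' k with ⟨q, rfl | rfl⟩
  · have := (Gamma_pos_of_pos (by positivity : 0 < 2 * μ)).ne'
    rw [integral_cos_pow_two_mul_mul_sin_rpow hμ.le,
      gegenbauerMomentFormula_of_eq_add_two_mul μ (n := 0) (j := q) (by ring), pow_mul]
    norm_num
    field_simp
  · rw [integral_cos_pow_mul_sin_rpow_of_odd hμ.le (odd_two_mul_add_one q),
      gegenbauerMomentFormula_of_odd μ (by simp)]

lemma gegenbauerMomentFormula_one {μ : ℝ} (hμ : 0 < μ) (k : ℕ) :
    gegenbauerMomentFormula μ 1 k = 2 * μ * gegenbauerMomentFormula μ 0 (k + 1) := by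
  rcases Nat.even_or_odd' k with ⟨j, rfl | rfl⟩
  · rw [gegenbauerMomentFormula_of_odd μ (by simp), gegenbauerMomentFormula_of_odd μ (by simp),
      mul_zero]
  · have hΓ : Gamma (2 * μ + (1 : ℕ)) = 2 * μ * Gamma (2 * μ) :=
      Gamma_eq_mul_Gamma_of_eq_add_one (by push_cast; ring) (by positivity)
    rw [gegenbauerMomentFormula_of_eq_add_two_mul μ (n := 1) (j := j) (by ring),
      gegenbauerMomentFormula_of_eq_add_two_mul μ (n := 0) (j := j + 1) (by ring), hΓ,
      show 0 + (j + 1) = 1 + j by ring, Nat.factorial_succ (2 * j + 1), Nat.factorial_succ j,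
      pow_succ]
    norm_num
    field_simp
    ring

theorem gegenbauerMoment_eq_formula {μ : ℝ} (hμ : 0 < μ) (n k : ℕ) :
    gegenbauerMoment μ n k = gegenbauerMomentFormula μ n k := by
  induction n using Nat.twoStepInduction generalizing k with
  | zero => rw [gegenbauerMoment_zero hμ, integral_cos_pow_mul_sin_rpow_eq_formula hμ]
  | one => rw [gegenbauerMoment_one hμ, integral_cos_pow_mul_sin_rpow_eq_formula hμ,
      gegenbauerMomentFormula_one hμ]
  | more n ih₀ ih₁ =>
    have h := gegenbauerMoment_add_two hμ n k
    rw [ih₁, ih₀, ← gegenbauerMomentFormula_add_two hμ] at h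
    exact mul_left_cancel₀ (by positivity) h

lemma hasSum_intervalIntegral_exp_mul {f g : ℝ → ℝ} (hf : Continuous f) (hg : Continuous g)
    (a b : ℝ) :
    HasSum (fun k : ℕ => ∫ t in a..b, f t ^ k / k.factorial * g t)
      (∫ t in a..b, exp (f t) * g t) := by
  obtain ⟨M, hM⟩ :=
    (isCompact_uIcc (a := a) (b := b)).exists_bound_of_continuousOn hf.continuousOn
  obtain ⟨C, hC⟩ :=
    (isCompact_uIcc (a := a) (b := b)).exists_bound_of_continuousOn hg.continuousOn
  refine intervalIntegral.hasSum_integral_of_dominated_convergence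
    (fun k _ => M ^ k / k.factorial * C)
    (fun k => (((hf.pow k).div_const _).mul hg).aestronglyMeasurable)
    (fun k => ae_of_all _ fun t ht => ?_)
    (ae_of_all _ fun _ _ => (summable_pow_div_factorial M).mul_right C)
    intervalIntegrable_const
    (ae_of_all _ fun t _ => ?_)
  · have ht' := uIoc_subset_uIcc ht
    rw [norm_mul, norm_div, norm_pow, RCLike.norm_natCast]
    have hM₀ : 0 ≤ M := (norm_nonneg _).trans (hM t ht')
    gcongr
    · exact hM t ht'
    · exact hC t ht'
  · rw [exp_eq_exp_ℝ]
    exact (NormedSpace.expSeries_div_hasSum_exp (f t)).mul_right (g t)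

lemma besselI_add_nat {x : ℝ} (hx : 0 < x) (μ : ℝ) (n : ℕ) :
    besselI (μ + n) x
      = (x / 2) ^ μ * ∑' j : ℕ, (x / 2) ^ (n + 2 * j)
          / (j.factorial * Gamma ((n + j : ℕ) + μ + 1)) := by
  rw [besselI, ← tsum_mul_left]
  refine tsum_congr fun j => ?_
  rw [show 2 * (j : ℝ) + (μ + n) = μ + (n + 2 * j : ℕ) by push_cast; ring,
    rpow_add (by positivity), rpow_natCast,
    show (j : ℝ) + (μ + n) + 1 = (n + j : ℕ) + μ + 1 by push_cast; ring]
  ring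

lemma tsum_gegenbauerMomentFormula {μ x : ℝ} (hμ : 0 < μ) (hx : 0 < x) (n : ℕ) :
    ∑' k : ℕ, (-x) ^ k / k.factorial * gegenbauerMomentFormula μ n k
      = 2 ^ μ * (-1) ^ n * √π * Gamma (μ + 1 / 2) * Gamma (2 * μ + n)
          / (n.factorial * Gamma (2 * μ)) * besselI (μ + n) x / x ^ μ := by
  have hinj : Function.Injective fun j : ℕ => n + 2 * j := fun a b h => by simp only at h; omega
  have hsupp :
      Function.support (fun k : ℕ => (-x) ^ k / k.factorial * gegenbauerMomentFormula μ n k)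
        ⊆ range fun j : ℕ => n + 2 * j := by
    intro k hk
    by_contra hk'
    rw [Function.mem_support] at hk
    refine hk ?_
    rcases lt_or_ge k n with hlt | hge
    · rw [gegenbauerMomentFormula_of_lt μ hlt, mul_zero]
    · rcases Nat.even_or_odd (k + n) with ⟨j, hj⟩ | hodd
      · exact absurd ⟨j - n, show n + 2 * (j - n) = k by omega⟩ hk'
      · rw [gegenbauerMomentFormula_of_odd μ hodd, mul_zero]
  have hterm : ∀ j : ℕ, (-x) ^ (n + 2 * j) / (n + 2 * j).factorial
        * gegenbauerMomentFormula μ n (n + 2 * j)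
      = (-1) ^ n * √π * Gamma (μ + 1 / 2) * Gamma (2 * μ + n) / (n.factorial * Gamma (2 * μ))
        * ((x / 2) ^ (n + 2 * j) / (j.factorial * Gamma ((n + j : ℕ) + μ + 1))) := by
    intro j
    have := (Gamma_pos_of_pos (by positivity : 0 < 2 * μ)).ne'
    have := (Gamma_pos_of_pos (by positivity : (0 : ℝ) < (n + j : ℕ) + μ + 1)).ne'
    rw [gegenbauerMomentFormula_of_eq_add_two_mul μ rfl, neg_pow, pow_add (-1 : ℝ), pow_mul,
      neg_one_sq, one_pow, div_pow]
    field_simp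
  have h2x : (2 : ℝ) ^ μ * (x / 2) ^ μ = x ^ μ := by
    rw [← mul_rpow (by norm_num) (by positivity), mul_div_cancel₀ x two_ne_zero]
  rw [← hinj.tsum_eq hsupp, tsum_congr hterm, tsum_mul_left, besselI_add_nat hx,
    eq_div_iff (rpow_pos_of_pos hx μ).ne', ← h2x]
  ring

theorem gegenbauer_integral_general (μ : ℝ) (hμ : 0 < μ) (n : ℕ) (x : ℝ) (hx : 0 < x) :
    (∫ θ in (0 : ℝ)..Real.pi,
        Real.exp (-(x * Real.cos θ)) * gegenbauerC μ n (Real.cos θ)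
          * Real.sin θ ^ (2 * μ))
      = 2 ^ μ * (-1 : ℝ) ^ n * Real.sqrt Real.pi * Real.Gamma (μ + 1 / 2)
          * Real.Gamma (2 * μ + n) / ((n.factorial : ℝ) * Real.Gamma (2 * μ))
          * besselI (μ + n) x / x ^ μ := by
  have hsum := hasSum_intervalIntegral_exp_mul (f := fun θ => -(x * cos θ))
    (g := fun θ => gegenbauerC μ n (cos θ) * sin θ ^ (2 * μ)) (by fun_prop)
    (((continuous_gegenbauerC μ n).comp continuous_cos).mul (continuous_sin_rpow hμ.le)) 0 π
  simp only [← mul_assoc] at hsum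
  rw [← hsum.tsum_eq, ← tsum_gegenbauerMomentFormula hμ hx n]
  refine tsum_congr fun k => ?_
  rw [← gegenbauerMoment_eq_formula hμ, gegenbauerMoment,
    ← intervalIntegral.integral_const_mul]
  congr 1 with θ
  ring

/-- Gegenbauer integral formula. -/
theorem gegenbauer_integral (μ : ℝ) (hμ : 0 < μ) (n : ℕ) (hn : 1 ≤ n) (x : ℝ) (hx : 0 < x) :
    (∫ θ in (0 : ℝ)..Real.pi,
        Real.exp (-(x * Real.cos θ)) * gegenbauerC μ n (Real.cos θ)
          * Real.sin θ ^ (2 * μ))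
      = 2 ^ μ * (-1 : ℝ) ^ n * Real.sqrt Real.pi * Real.Gamma (μ + 1 / 2)
          * Real.Gamma (2 * μ + n) / ((n.factorial : ℝ) * Real.Gamma (2 * μ))
          * besselI (μ + n) x / x ^ μ :=
  gegenbauer_integral_general μ hμ n x hx
end
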